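/- arXiv:1102.0862 — 8 statements merged into one kernel-verified Lean document; each statement's English description precedes it below -/
import Mathlib

section
/- Composition of partitioned binary relations is associative: for finite sets X, Y, Z, U and PBRs α on (X,Y), β on (Y,Z) and γ on (Z,U), one has γ∘(β∘α) = (γ∘β)∘α. -/
/-!
Both bracketings equal `comp3 α β γ`, which relates `a` and `b` when some walk from `a` to `b`
in `X ⊕ Y ⊕ Z ⊕ U` uses edges of `α`, `β` and `γ` with no two successive edges from the same
PBR. For `γ ∘ (β ∘ α)`, expand every `β ∘ α`-edge into its `(α, β)`-connected sequence; conversely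
cut a ternary walk into maximal `α`/`β`-runs, which begin and end in `X ⊕ Z` because that is
where they meet `γ`-edges or the endpoints. The other bracketing follows by symmetry: reversing
all edges gives `rev (β ∘ α) = rev α ∘ rev β` and reverses ternary walks, exchanging `α` and `γ`.
-/

namespace PBRPaper

/-- A partitioned binary relation (PBR) on `(X, Y)`: a binary relation on
the disjoint union `X ⊕ Y`. -/
abbrev PBR (X Y : Type) : Type := Set ((X ⊕ Y) × (X ⊕ Y))

variable {X Y Z : Type}

/-- The inclusion of `X ⊕ Y` into `X ⊕ Y ⊕ Z`. -/
def ι₁ : X ⊕ Y → X ⊕ Y ⊕ Z := Sum.elim Sum.inl fun y => Sum.inr (Sum.inl y)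

/-- The inclusion of `Y ⊕ Z` into `X ⊕ Y ⊕ Z`. -/
def ι₂ : Y ⊕ Z → X ⊕ Y ⊕ Z :=
  Sum.elim (fun y => Sum.inr (Sum.inl y)) fun z => Sum.inr (Sum.inr z)

/-- The inclusion of `X ⊕ Z` into `X ⊕ Y ⊕ Z`. -/
def ι₀ : X ⊕ Z → X ⊕ Y ⊕ Z := Sum.elim Sum.inl fun z => Sum.inr (Sum.inr z)

/-- Labeled edges in the ambient `X ⊕ Y ⊕ Z`: label `false` means
"an edge of `α`", label `true` means "an edge of `β`". -/
def EdgeMem (α : PBR X Y) (β : PBR Y Z)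
    (e : Bool × (X ⊕ Y ⊕ Z) × (X ⊕ Y ⊕ Z)) : Prop :=
  if e.1 then ∃ p ∈ β, ι₂ p.1 = e.2.1 ∧ ι₂ p.2 = e.2.2
  else ∃ p ∈ α, ι₁ p.1 = e.2.1 ∧ ι₁ p.2 = e.2.2

/-- An `(α,β)`-connected sequence: a nonempty list of labeled edges of `α`/`β`,
no two successive edges from the same PBR, endpoints matching up. -/
def IsConnSeq (α : PBR X Y) (β : PBR Y Z)
    (L : List (Bool × (X ⊕ Y ⊕ Z) × (X ⊕ Y ⊕ Z))) : Prop :=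
  L ≠ [] ∧ (∀ e ∈ L, EdgeMem α β e) ∧
    L.Chain' fun e f => e.1 ≠ f.1 ∧ e.2.2 = f.2.1

/-- `L` is an `(α,β)`-connected sequence connecting `a` to `b`. -/
def ConnectsVia (α : PBR X Y) (β : PBR Y Z)
    (L : List (Bool × (X ⊕ Y ⊕ Z) × (X ⊕ Y ⊕ Z))) (a b : X ⊕ Z) : Prop :=
  IsConnSeq α β L ∧ L.head?.map (fun e => e.2.1) = some (ι₀ a) ∧
    L.getLast?.map (fun e => e.2.2) = some (ι₀ b)

/-- Composition of partitioned binary relations. -/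
def comp (β : PBR Y Z) (α : PBR X Y) : PBR X Z :=
  {p | ∃ L, ConnectsVia α β L p.1 p.2}

/-- The identity PBR `ε_X`, consisting of all edges `(x^(d), x^(c))`
and `(x^(c), x^(d))`. -/
def eps (X : Type) : PBR X X :=
  {p | ∃ x : X, p = (Sum.inl x, Sum.inr x) ∨ p = (Sum.inr x, Sum.inl x)}

/-- A labeled edge is `(α,β)`-frothy if it is an edge of the corresponding PBR
occurring in no `(α,β)`-connected sequence connecting two elements of `X ⊕ Z`. -/
def IsFrothy (α : PBR X Y) (β : PBR Y Z)
    (e : Bool × (X ⊕ Y ⊕ Z) × (X ⊕ Y ⊕ Z)) : Prop :=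
  EdgeMem α β e ∧ ∀ L a b, ConnectsVia α β L a b → e ∉ L

/-- An `(α,β)`-frothy cycle. -/
def IsFrothyCycle (α : PBR X Y) (β : PBR Y Z)
    (L : List (Bool × (X ⊕ Y ⊕ Z) × (X ⊕ Y ⊕ Z))) : Prop :=
  IsConnSeq α β L ∧ 2 ≤ L.length ∧
    L.getLast?.map (fun e => e.2.2) = L.head?.map (fun e => e.2.1) ∧
    L.head?.map (fun e => e.1) ≠ L.getLast?.map (fun e => e.1) ∧
    ∀ e ∈ L, IsFrothy α β e

/-- The type of `(α,β)`-frothy cycles. -/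
def FrothyCycles (α : PBR X Y) (β : PBR Y Z) :=
  {L : List (Bool × (X ⊕ Y ⊕ Z) × (X ⊕ Y ⊕ Z)) // IsFrothyCycle α β L}

/-- `𝔣((α,β))`: the number of equivalence classes of `(α,β)`-frothy cycles,
where the equivalence is generated by elementary equivalence (sharing a common
edge of the same PBR); note that naive equivalence (cyclic permutation) is
subsumed, since a cycle and any of its cyclic permutations share all edges. -/
noncomputable def fPBR (α : PBR X Y) (β : PBR Y Z) : ℕ :=
  Nat.card (Quot fun L L' : FrothyCycles α β => ∃ e, e ∈ L.1 ∧ e ∈ L'.1)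

section AltWalk

variable {V Λ V' Λ' : Type}

inductive AltWalk (E : Λ → V → V → Prop) : V → Λ → Λ → V → Prop
  | single {l a b} : E l a b → AltWalk E a l l b
  | cons {l l' m a b c} : E l a b → l ≠ l' → AltWalk E b l' m c → AltWalk E a l m c

def AltTail (E : Λ → V → V → Prop) (a : V) (l : Λ) (b : V) : Prop :=
  a = b ∨ ∃ l' m, l ≠ l' ∧ AltWalk E a l' m b

variable {E : Λ → V → V → Prop}

namespace AltWalk

theorem append {a b c : V} {l m l' m' : Λ} (h₁ : AltWalk E a l m b) (hm : m ≠ l')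
    (h₂ : AltWalk E b l' m' c) : AltWalk E a l m' c := by
  induction h₁ with
  | single he => exact .cons he hm h₂
  | cons he hl _ ih => exact .cons he hl (ih hm h₂)

theorem map {E' : Λ' → V' → V' → Prop} (f : V → V') {g : Λ → Λ'} (hg : g.Injective)
    (hE : ∀ l u v, E l u v → E' (g l) (f u) (f v)) {a b : V} {l m : Λ}
    (h : AltWalk E a l m b) : AltWalk E' (f a) (g l) (g m) (f b) := by
  induction h with
  | single he => exact .single (hE _ _ _ he)
  | cons he hl _ ih => exact .cons (hE _ _ _ he) (hg.ne hl) ih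

theorem reverse {a b : V} {l m : Λ} (h : AltWalk E a l m b) :
    AltWalk (fun l u v => E l v u) b m l a := by
  induction h with
  | single he => exact .single he
  | cons he hl _ ih => exact ih.append (Ne.symm hl) (.single he)

end AltWalk

theorem AltTail.exists_altWalk_of_edge {a v b : V} {l : Λ} (he : E l a v)
    (ht : AltTail E v l b) : ∃ m, AltWalk E a l m b := by
  rcases ht with rfl | ⟨l', m, hl, hw⟩
  · exact ⟨l, .single he⟩
  · exact ⟨m, .cons he hl hw⟩

end AltWalk

section Bridge

variable {X Y Z : Type} (α : PBR X Y) (β : PBR Y Z)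

def Edge (l : Bool) (u v : X ⊕ Y ⊕ Z) : Prop := EdgeMem α β (l, u, v)

variable {α β}

theorem edge_false {p : (X ⊕ Y) × (X ⊕ Y)} (hp : p ∈ α) :
    Edge α β false (ι₁ p.1) (ι₁ p.2) := ⟨p, hp, rfl, rfl⟩

theorem edge_true {p : (Y ⊕ Z) × (Y ⊕ Z)} (hp : p ∈ β) :
    Edge α β true (ι₂ p.1) (ι₂ p.2) := ⟨p, hp, rfl, rfl⟩

theorem isConnSeq_iff {L : List (Bool × (X ⊕ Y ⊕ Z) × (X ⊕ Y ⊕ Z))} :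
    IsConnSeq α β L ↔ L ≠ [] ∧ (∀ e ∈ L, EdgeMem α β e) ∧
      L.IsChain fun e f => e.1 ≠ f.1 ∧ e.2.2 = f.2.1 := Iff.rfl

theorem isConnSeq_singleton {e : Bool × (X ⊕ Y ⊕ Z) × (X ⊕ Y ⊕ Z)} :
    IsConnSeq α β [e] ↔ EdgeMem α β e := by
  simp [isConnSeq_iff]

theorem isConnSeq_cons_cons {e f : Bool × (X ⊕ Y ⊕ Z) × (X ⊕ Y ⊕ Z)} {L} :
    IsConnSeq α β (e :: f :: L) ↔
      EdgeMem α β e ∧ (e.1 ≠ f.1 ∧ e.2.2 = f.2.1) ∧ IsConnSeq α β (f :: L) := by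
  simp only [isConnSeq_iff, List.isChain_cons_cons, List.forall_mem_cons]
  tauto

theorem altWalk_iff_isConnSeq {a b : X ⊕ Y ⊕ Z} {l m : Bool} :
    AltWalk (Edge α β) a l m b ↔ ∃ L, IsConnSeq α β L ∧
      L.head?.map (fun e => (e.1, e.2.1)) = some (l, a) ∧
      L.getLast?.map (fun e => (e.1, e.2.2)) = some (m, b) := by
  constructor
  · intro h
    induction h with
    | @single l a b he => exact ⟨[(l, a, b)], isConnSeq_singleton.2 he, rfl, rfl⟩
    | @cons l l' m a b c he hl _ ih =>
      obtain ⟨_ | ⟨f, L⟩, hL, hhead, hlast⟩ := ih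
      · exact absurd hL.1 (by simp)
      · simp only [List.head?_cons, Option.map_some, Option.some.injEq, Prod.mk.injEq] at hhead
        refine ⟨(l, a, b) :: f :: L, isConnSeq_cons_cons.2 ⟨he, ⟨?_, ?_⟩, hL⟩, rfl, ?_⟩
        · exact hhead.1 ▸ hl
        · exact hhead.2.symm
        · rwa [List.getLast?_cons_cons]
  · rintro ⟨L, hL, hhead, hlast⟩
    induction L generalizing a l with
    | nil => exact absurd hL.1 (by simp)
    | cons e L ih =>
      simp only [List.head?_cons, Option.map_some, Option.some.injEq, Prod.mk.injEq] at hhead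
      obtain ⟨rfl, rfl⟩ := hhead
      cases L with
      | nil =>
        simp only [List.getLast?_singleton, Option.map_some, Option.some.injEq,
          Prod.mk.injEq] at hlast
        obtain ⟨rfl, rfl⟩ := hlast
        exact .single (isConnSeq_singleton.1 hL)
      | cons f L =>
        obtain ⟨he, ⟨hl, hv⟩, hL⟩ := isConnSeq_cons_cons.1 hL
        rw [List.getLast?_cons_cons] at hlast
        exact .cons he hl (ih hL (by simp [hv]) hlast)

theorem mem_comp_iff_altWalk {a b : X ⊕ Z} :
    (a, b) ∈ comp β α ↔ ∃ l m, AltWalk (Edge α β) (ι₀ a) l m (ι₀ b) := by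
  simp only [altWalk_iff_isConnSeq]
  constructor
  · rintro ⟨_ | ⟨e, L⟩, hL, hhead, hlast⟩
    · exact absurd hL.1 (by simp)
    · simp only [List.head?_cons, Option.map_some, Option.some.injEq] at hhead
      obtain ⟨f, hf⟩ := Option.isSome_iff_exists.1 (List.getLast?_isSome.2 (List.cons_ne_nil e L))
      rw [hf, Option.map_some, Option.some.injEq] at hlast
      exact ⟨e.1, f.1, e :: L, hL, by simp [hhead], by simp [hf, hlast]⟩
  · rintro ⟨l, m, L, hL, hhead, hlast⟩
    refine ⟨L, hL, ?_, ?_⟩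
    · simpa using congrArg (Option.map Prod.snd) hhead
    · simpa using congrArg (Option.map Prod.snd) hlast

end Bridge

section Reversal

variable {X Y Z : Type}

def rev (α : PBR X Y) : PBR Y X := {p | (p.2.swap, p.1.swap) ∈ α}

@[simp] theorem mem_rev {α : PBR X Y} {p : (Y ⊕ X) × (Y ⊕ X)} :
    p ∈ rev α ↔ (p.2.swap, p.1.swap) ∈ α := Iff.rfl

@[simp] theorem rev_rev (α : PBR X Y) : rev (rev α) = α := by
  ext p
  simp

theorem subset_rev_iff {α : PBR X Y} {β : PBR Y X} : α ⊆ rev β ↔ rev α ⊆ β := by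
  constructor
  · intro h p hp
    simpa using h hp
  · intro h p hp
    exact h (by simpa using hp)

def swap3 : X ⊕ Y ⊕ Z → Z ⊕ Y ⊕ X :=
  Sum.elim (fun x => Sum.inr (Sum.inr x)) (Sum.elim (fun y => Sum.inr (Sum.inl y)) Sum.inl)

@[simp] theorem swap3_ι₀ (w : X ⊕ Z) : swap3 (ι₀ (Y := Y) w) = ι₀ w.swap := by
  cases w <;> rfl

@[simp] theorem swap3_ι₁ (w : X ⊕ Y) : swap3 (ι₁ (Z := Z) w) = ι₂ w.swap := by
  cases w <;> rfl

@[simp] theorem swap3_ι₂ (w : Y ⊕ Z) : swap3 (ι₂ (X := X) w) = ι₁ w.swap := by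
  cases w <;> rfl

theorem edge_rev {α : PBR X Y} {β : PBR Y Z} {l : Bool} {u v : X ⊕ Y ⊕ Z}
    (h : Edge α β l u v) : Edge (rev β) (rev α) (!l) (swap3 v) (swap3 u) := by
  cases l <;> obtain ⟨p, hp, rfl, rfl⟩ := h
  · simpa using edge_true (α := rev β) (p := (p.2.swap, p.1.swap)) (by simpa using hp)
  · simpa using edge_false (β := rev α) (p := (p.2.swap, p.1.swap)) (by simpa using hp)

theorem rev_comp_subset (α : PBR X Y) (β : PBR Y Z) :
    rev (comp β α) ⊆ comp (rev α) (rev β) := by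
  rintro ⟨a, b⟩ h
  obtain ⟨l, m, hw⟩ := mem_comp_iff_altWalk.1 h
  refine mem_comp_iff_altWalk.2 ⟨!m, !l, ?_⟩
  simpa using hw.reverse.map swap3 Bool.not_injective fun _ _ _ => edge_rev

theorem rev_comp (α : PBR X Y) (β : PBR Y Z) : rev (comp β α) = comp (rev α) (rev β) := by
  refine (rev_comp_subset α β).antisymm (subset_rev_iff.2 ?_)
  simpa using rev_comp_subset (rev β) (rev α)

end Reversal

section Ternary

variable {X Y Z U : Type}

def embInner : X ⊕ Y ⊕ Z → X ⊕ Y ⊕ Z ⊕ U := Sum.map id (Sum.map id Sum.inl)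

def embOuter : X ⊕ Z ⊕ U → X ⊕ Y ⊕ Z ⊕ U := Sum.map id Sum.inr

theorem embInner_injective : (embInner : X ⊕ Y ⊕ Z → X ⊕ Y ⊕ Z ⊕ U).Injective :=
  Sum.map_injective.2 ⟨Function.injective_id, Sum.map_injective.2
    ⟨Function.injective_id, Sum.inl_injective⟩⟩

theorem embOuter_injective : (embOuter : X ⊕ Z ⊕ U → X ⊕ Y ⊕ Z ⊕ U).Injective :=
  Sum.map_injective.2 ⟨Function.injective_id, Sum.inr_injective⟩

theorem embInner_eq_embOuter_iff {u : X ⊕ Y ⊕ Z} {v : X ⊕ Z ⊕ U} :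
    embInner u = embOuter v ↔ ∃ w : X ⊕ Z, u = ι₀ w ∧ v = ι₁ w := by
  constructor
  · rcases u with x | y | z <;> rcases v with x' | z' | u' <;>
      simp [embInner, embOuter, ι₀, ι₁, eq_comm]
  · rintro ⟨w | w, rfl, rfl⟩ <;> rfl

/-- Edges of `α`, `β`, `γ` inside `X ⊕ Y ⊕ Z ⊕ U`: label `some false` for `α`, `some true`
for `β` (the labels of the inner composite `β ∘ α`), and `none` for `γ`. -/
def Edge3 (α : PBR X Y) (β : PBR Y Z) (γ : PBR Z U) :
    Option Bool → X ⊕ Y ⊕ Z ⊕ U → X ⊕ Y ⊕ Z ⊕ U → Prop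
  | some false, u, v => ∃ p ∈ α, embInner (ι₁ p.1) = u ∧ embInner (ι₁ p.2) = v
  | some true, u, v => ∃ p ∈ β, embInner (ι₂ p.1) = u ∧ embInner (ι₂ p.2) = v
  | none, u, v => ∃ p ∈ γ, embOuter (ι₂ p.1) = u ∧ embOuter (ι₂ p.2) = v

def comp3 (α : PBR X Y) (β : PBR Y Z) (γ : PBR Z U) : PBR X U :=
  {p | ∃ l m, AltWalk (Edge3 α β γ) (embOuter (ι₀ p.1)) l m (embOuter (ι₀ p.2))}

variable {α : PBR X Y} {β : PBR Y Z} {γ : PBR Z U}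

theorem edge3_some_iff {l : Bool} {u v : X ⊕ Y ⊕ Z ⊕ U} :
    Edge3 α β γ (some l) u v ↔
      ∃ u' v', Edge α β l u' v' ∧ embInner u' = u ∧ embInner v' = v := by
  constructor
  · cases l <;> rintro ⟨p, hp, rfl, rfl⟩
    exacts [⟨_, _, edge_false hp, rfl, rfl⟩, ⟨_, _, edge_true hp, rfl, rfl⟩]
  · rintro ⟨u', v', he, rfl, rfl⟩
    cases l <;> obtain ⟨p, hp, rfl, rfl⟩ := he <;> exact ⟨p, hp, rfl, rfl⟩

theorem edge3_none_iff {u v : X ⊕ Y ⊕ Z ⊕ U} :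
    Edge3 α β γ none u v ↔
      ∃ u' v', Edge (comp β α) γ true u' v' ∧ embOuter u' = u ∧ embOuter v' = v := by
  constructor
  · rintro ⟨p, hp, rfl, rfl⟩
    exact ⟨_, _, edge_true hp, rfl, rfl⟩
  · rintro ⟨u', v', ⟨p, hp, rfl, rfl⟩, rfl, rfl⟩
    exact ⟨p, hp, rfl, rfl⟩

theorem embInner_ι₀ (w : X ⊕ Z) :
    (embInner (ι₀ w) : X ⊕ Y ⊕ Z ⊕ U) = embOuter (ι₁ w) :=
  embInner_eq_embOuter_iff.2 ⟨w, rfl, rfl⟩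

theorem exists_edge3_walk_of_edge {l : Bool} {u v : X ⊕ Z ⊕ U}
    (h : Edge (comp β α) γ l u v) :
    ∃ l₃ m₃, AltWalk (Edge3 α β γ) (embOuter u) l₃ m₃ (embOuter v) ∧
      l₃.isNone = l ∧ m₃.isNone = l := by
  cases l
  · obtain ⟨p, hp, rfl, rfl⟩ := h
    obtain ⟨l, m, hw⟩ := mem_comp_iff_altWalk.1 hp
    refine ⟨some l, some m, ?_, rfl, rfl⟩
    have hw₃ := hw.map embInner (Option.some_injective _) fun _ u v he =>
      edge3_some_iff (γ := γ).2 ⟨u, v, he, rfl, rfl⟩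
    rwa [embInner_ι₀, embInner_ι₀] at hw₃
  · exact ⟨none, none, .single (edge3_none_iff.2 ⟨u, v, h, rfl, rfl⟩), rfl, rfl⟩

theorem exists_edge3_walk_of_walk {l m : Bool} {u v : X ⊕ Z ⊕ U}
    (h : AltWalk (Edge (comp β α) γ) u l m v) :
    ∃ l₃ m₃, AltWalk (Edge3 α β γ) (embOuter u) l₃ m₃ (embOuter v) ∧
      l₃.isNone = l ∧ m₃.isNone = m := by
  induction h with
  | single he => exact exists_edge3_walk_of_edge he
  | cons he hl _ ih =>
    obtain ⟨l₃, m₃, hw, rfl, hm⟩ := exists_edge3_walk_of_edge he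
    obtain ⟨l₃', m₃', hw', rfl, rfl⟩ := ih
    exact ⟨l₃, m₃', hw.append (fun h => hl (hm.symm.trans (congrArg _ h))) hw', rfl, rfl⟩

variable (α β γ) in
/-- A ternary walk from `u`, with first label `l`, to `b` regroups into a walk of the pair
`(β ∘ α, γ)`: either it starts with a `γ`-edge and is such a walk, or it starts with a maximal
`α`/`β`-run from `u` to some `q : X ⊕ Z`, which is followed by such a walk (or by nothing). -/
def Regrouped (u : X ⊕ Y ⊕ Z ⊕ U) (l : Option Bool) (b : X ⊕ U) : Prop :=
  (l = none ∧ ∃ v, embOuter v = u ∧ ∃ m, AltWalk (Edge (comp β α) γ) v true m (ι₀ b)) ∨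
  ∃ l' m' u' q, some l' = l ∧ embInner u' = u ∧ AltWalk (Edge α β) u' l' m' (ι₀ q) ∧
    AltTail (Edge (comp β α) γ) (ι₁ q) false (ι₀ b)

theorem exists_walk_comp_of_walk {q₀ q : X ⊕ Z} {b : X ⊕ U} {l m : Bool}
    (hw : AltWalk (Edge α β) (ι₀ q₀) l m (ι₀ q))
    (ht : AltTail (Edge (comp β α) γ) (ι₁ q) false (ι₀ b)) :
    ∃ m, AltWalk (Edge (comp β α) γ) (ι₁ q₀) false m (ι₀ b) :=
  ht.exists_altWalk_of_edge (edge_false (p := (q₀, q)) (mem_comp_iff_altWalk.2 ⟨l, m, hw⟩))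

theorem regrouped_of_edge3 {l : Option Bool} {u : X ⊕ Y ⊕ Z ⊕ U} {b : X ⊕ U}
    (h : Edge3 α β γ l u (embOuter (ι₀ b))) : Regrouped α β γ u l b := by
  cases l with
  | none =>
    obtain ⟨u', v', he, rfl, hv⟩ := edge3_none_iff.1 h
    exact Or.inl ⟨rfl, u', rfl, true, .single (embOuter_injective hv ▸ he)⟩
  | some l =>
    obtain ⟨u', v', he, rfl, hv⟩ := edge3_some_iff.1 h
    obtain ⟨q, rfl, hq⟩ := embInner_eq_embOuter_iff.1 hv
    exact Or.inr ⟨l, l, u', q, rfl, rfl, .single he, Or.inl hq.symm⟩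

theorem Regrouped.cons {l l' : Option Bool} {u v : X ⊕ Y ⊕ Z ⊕ U} {b : X ⊕ U}
    (he₃ : Edge3 α β γ l u v) (hl : l ≠ l') (h : Regrouped α β γ v l' b) :
    Regrouped α β γ u l b := by
  cases l with
  | none =>
    obtain ⟨u₁, v₁, he, rfl, rfl⟩ := edge3_none_iff.1 he₃
    rcases h with ⟨rfl, -⟩ | ⟨l', m', u', q, rfl, hu', hw, ht⟩
    · exact absurd rfl hl
    · obtain ⟨q₀, rfl, rfl⟩ := embInner_eq_embOuter_iff.1 hu'
      obtain ⟨m, hw'⟩ := exists_walk_comp_of_walk hw ht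
      exact Or.inl ⟨rfl, u₁, rfl, m, .cons he (by decide) hw'⟩
  | some l =>
    obtain ⟨u₁, v₁, he, rfl, rfl⟩ := edge3_some_iff.1 he₃
    rcases h with ⟨rfl, v, hv, m, hw⟩ | ⟨l', m', u', q, rfl, hu', hw, ht⟩
    · obtain ⟨q, rfl, rfl⟩ := embInner_eq_embOuter_iff.1 hv.symm
      exact Or.inr ⟨l, l, u₁, q, rfl, rfl, .single he, Or.inr ⟨true, m, (by decide), hw⟩⟩
    · obtain rfl := embInner_injective hu'
      exact Or.inr ⟨l, m', u₁, q, rfl, rfl, .cons he (fun h => hl (congrArg some h)) hw, ht⟩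

theorem regrouped_of_altWalk {l m : Option Bool} {u : X ⊕ Y ⊕ Z ⊕ U} {b : X ⊕ U}
    (h : AltWalk (Edge3 α β γ) u l m (embOuter (ι₀ b))) : Regrouped α β γ u l b := by
  generalize hw : embOuter (ι₀ b) = w at h
  induction h with
  | single he => exact regrouped_of_edge3 (hw ▸ he)
  | cons he hl _ ih => exact (ih hw).cons he hl

theorem Regrouped.exists_walk {a b : X ⊕ U} {l : Option Bool}
    (h : Regrouped α β γ (embOuter (ι₀ a)) l b) :
    ∃ l m, AltWalk (Edge (comp β α) γ) (ι₀ a) l m (ι₀ b) := by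
  rcases h with ⟨-, v, hv, m, hw⟩ | ⟨l', m', u', q, -, hu', hw, ht⟩
  · exact ⟨true, m, embOuter_injective hv ▸ hw⟩
  · obtain ⟨q₀, rfl, hq₀⟩ := embInner_eq_embOuter_iff.1 hu'
    obtain ⟨m, hw'⟩ := exists_walk_comp_of_walk hw ht
    exact ⟨false, m, hq₀ ▸ hw'⟩

theorem comp_comp_eq_comp3 : comp γ (comp β α) = comp3 α β γ := by
  ext ⟨a, b⟩
  rw [mem_comp_iff_altWalk]
  constructor
  · rintro ⟨l, m, hw⟩
    obtain ⟨l₃, m₃, hw₃, -, -⟩ := exists_edge3_walk_of_walk hw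
    exact ⟨l₃, m₃, hw₃⟩
  · rintro ⟨l, m, hw⟩
    exact (regrouped_of_altWalk hw).exists_walk

end Ternary

section Mirror

variable {X Y Z U : Type}

def swap4 : X ⊕ Y ⊕ Z ⊕ U → U ⊕ Z ⊕ Y ⊕ X :=
  Sum.elim (fun x => Sum.inr (Sum.inr (Sum.inr x)))
    (Sum.elim (fun y => Sum.inr (Sum.inr (Sum.inl y)))
      (Sum.elim (fun z => Sum.inr (Sum.inl z)) Sum.inl))

def swapLabel : Option Bool → Option Bool
  | none => some false
  | some false => none
  | some true => some true

theorem swapLabel_injective : swapLabel.Injective := by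
  rintro (_ | _ | _) (_ | _ | _) h <;> first | rfl | cases h

@[simp] theorem swap4_embInner_ι₁ (w : X ⊕ Y) :
    swap4 (embInner (ι₁ (Z := Z) w) : X ⊕ Y ⊕ Z ⊕ U) = embOuter (ι₂ w.swap) := by
  cases w <;> rfl

@[simp] theorem swap4_embInner_ι₂ (w : Y ⊕ Z) :
    swap4 (embInner (ι₂ (X := X) w) : X ⊕ Y ⊕ Z ⊕ U) = embInner (ι₂ w.swap) := by
  cases w <;> rfl

@[simp] theorem swap4_embOuter_ι₂ (w : Z ⊕ U) :
    swap4 (embOuter (ι₂ (X := X) w) : X ⊕ Y ⊕ Z ⊕ U) = embInner (ι₁ w.swap) := by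
  cases w <;> rfl

@[simp] theorem swap4_embOuter_ι₀ (w : X ⊕ U) :
    swap4 (embOuter (ι₀ (Y := Z) w) : X ⊕ Y ⊕ Z ⊕ U) = embOuter (ι₀ w.swap) := by
  cases w <;> rfl

variable {α : PBR X Y} {β : PBR Y Z} {γ : PBR Z U}

theorem edge3_rev {l : Option Bool} {u v : X ⊕ Y ⊕ Z ⊕ U} (h : Edge3 α β γ l u v) :
    Edge3 (rev γ) (rev β) (rev α) (swapLabel l) (swap4 v) (swap4 u) := by
  rcases l with _ | _ | _ <;> obtain ⟨p, hp, rfl, rfl⟩ := h <;>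
    exact ⟨(p.2.swap, p.1.swap), by simpa using hp, by simp, by simp⟩

variable (α β γ)

theorem rev_comp3_subset : rev (comp3 α β γ) ⊆ comp3 (rev γ) (rev β) (rev α) := by
  rintro ⟨a, b⟩ ⟨l, m, hw⟩
  refine ⟨swapLabel m, swapLabel l, ?_⟩
  simpa using hw.reverse.map swap4 swapLabel_injective fun _ _ _ => edge3_rev

theorem rev_comp3 : rev (comp3 α β γ) = comp3 (rev γ) (rev β) (rev α) := by
  refine (rev_comp3_subset α β γ).antisymm (subset_rev_iff.2 ?_)
  simpa using rev_comp3_subset (rev γ) (rev β) (rev α)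

end Mirror

theorem pbr_comp_assoc_general (X Y Z U : Type)
    (α : PBR X Y) (β : PBR Y Z) (γ : PBR Z U) :
    comp γ (comp β α) = comp (comp γ β) α :=
  calc comp γ (comp β α) = comp3 α β γ := comp_comp_eq_comp3
    _ = rev (comp3 (rev γ) (rev β) (rev α)) := by rw [rev_comp3, rev_rev, rev_rev, rev_rev]
    _ = rev (comp (rev α) (comp (rev β) (rev γ))) := by rw [comp_comp_eq_comp3]
    _ = comp (comp γ β) α := by rw [← rev_comp, ← rev_comp, rev_rev]

/-- Composition of partitioned binary relations is associative. -/
theorem pbr_comp_assoc (X Y Z U : Type)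
    [Fintype X] [Fintype Y] [Fintype Z] [Fintype U]
    (α : PBR X Y) (β : PBR Y Z) (γ : PBR Z U) :
    comp γ (comp β α) = comp (comp γ β) α :=
  pbr_comp_assoc_general X Y Z U α β γ

end PBRPaper
end

section
/- For binary relations θ ⊆ X×Y and η ⊆ Y×Z between finite sets, let Φ₁(θ) be the PBR on (X,Y) whose edges are exactly the pairs (x^(d),y^(c)) with (x,y) ∈ θ. Then Φ₁(η∘θ) = Φ₁(η)∘Φ₁(θ), where η∘θ = {(x,z) : ∃y, (x,y) ∈ θ and (y,z) ∈ η} is the usual composition of binary relations and the composition on the right-hand side is composition of PBRs. In other words, Φ₁ is an inclusion of the category of binary relations into the category of PBRs which respects composition. -/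
namespace PBRPaper

variable {X Y Z : Type}

/-- The inclusion `Φ₁` of binary relations into PBRs: the edges of `Φ₁(θ)`
are exactly the pairs `(x^(d), y^(c))` with `(x, y) ∈ θ`. -/
def Phi1 {X Y : Type} (θ : Set (X × Y)) : PBR X Y :=
  {p | ∃ q ∈ θ, p = (Sum.inl q.1, Sum.inr q.2)}

/-- Usual composition of binary relations: `η∘θ = {(x,z) : ∃ y, (x,y) ∈ θ ∧ (y,z) ∈ η}`. -/
def relComp {X Y Z : Type} (η : Set (Y × Z)) (θ : Set (X × Y)) : Set (X × Z) :=
  {p | ∃ y, (p.1, y) ∈ θ ∧ (y, p.2) ∈ η}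

lemma phi1_injective : Function.Injective (Phi1 (X := X) (Y := Y)) := by
  intro θ₁ θ₂ h
  ext ⟨x, y⟩
  simpa [Phi1] using Set.ext_iff.mp h (Sum.inl x, Sum.inr y)

lemma edgeMem_phi1_iff {θ : Set (X × Y)} {η : Set (Y × Z)}
    {e : Bool × (X ⊕ Y ⊕ Z) × (X ⊕ Y ⊕ Z)} :
    EdgeMem (Phi1 θ) (Phi1 η) e ↔
      (∃ x y, (x, y) ∈ θ ∧ e = (false, Sum.inl x, Sum.inr (Sum.inl y))) ∨
      (∃ y z, (y, z) ∈ η ∧ e = (true, Sum.inr (Sum.inl y), Sum.inr (Sum.inr z))) := by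
  rcases e with ⟨_ | _, s, t⟩ <;> simp [EdgeMem, Phi1, ι₁, ι₂, eq_comm]

lemma ι₀_ne_inr_inl (a : X ⊕ Z) (y : Y) : ι₀ a ≠ Sum.inr (Sum.inl y) := by
  cases a <;> simp [ι₀]

lemma phi1_edges_adjacent {θ : Set (X × Y)} {η : Set (Y × Z)}
    {e f : Bool × (X ⊕ Y ⊕ Z) × (X ⊕ Y ⊕ Z)} (he : EdgeMem (Phi1 θ) (Phi1 η) e)
    (hf : EdgeMem (Phi1 θ) (Phi1 η) f) (hef : e.2.2 = f.2.1) :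
    ∃ x y z, (x, y) ∈ θ ∧ (y, z) ∈ η ∧ e = (false, Sum.inl x, Sum.inr (Sum.inl y)) ∧
      f = (true, Sum.inr (Sum.inl y), Sum.inr (Sum.inr z)) := by
  rw [edgeMem_phi1_iff] at he hf
  rcases he with ⟨x, y, hxy, rfl⟩ | ⟨y, z, -, rfl⟩ <;>
    rcases hf with ⟨x', y', -, rfl⟩ | ⟨y', z', hyz, rfl⟩ <;> simp_all

/- Edges of `Φ₁ θ` run from `X` to `Y` and edges of `Φ₁ η` from `Y` to `Z`, so nothing can
follow an `η`-edge, and a single edge never joins two points of `X ⊕ Z`. -/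
lemma connectsVia_phi1_iff {θ : Set (X × Y)} {η : Set (Y × Z)}
    {L : List (Bool × (X ⊕ Y ⊕ Z) × (X ⊕ Y ⊕ Z))} {a b : X ⊕ Z} :
    ConnectsVia (Phi1 θ) (Phi1 η) L a b ↔
      ∃ x y z, (x, y) ∈ θ ∧ (y, z) ∈ η ∧ a = Sum.inl x ∧ b = Sum.inr z ∧
        L = [(false, Sum.inl x, Sum.inr (Sum.inl y)),
          (true, Sum.inr (Sum.inl y), Sum.inr (Sum.inr z))] := by
  constructor
  · rintro ⟨⟨hne, hmem, hchain⟩, hhead, hlast⟩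
    rcases L with _ | ⟨e₁, _ | ⟨e₂, _ | ⟨e₃, L⟩⟩⟩
    · exact absurd rfl hne
    · simp only [List.head?_cons, List.getLast?_singleton, Option.map_some,
        Option.some.injEq] at hhead hlast
      rcases edgeMem_phi1_iff.mp (hmem e₁ (by simp)) with ⟨x, y, -, rfl⟩ | ⟨y, z, -, rfl⟩
      · exact absurd hlast.symm (ι₀_ne_inr_inl b y)
      · exact absurd hhead.symm (ι₀_ne_inr_inl a y)
    · obtain ⟨-, hend⟩ := List.isChain_pair.mp hchain
      obtain ⟨x, y, z, hxy, hyz, rfl, rfl⟩ :=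
        phi1_edges_adjacent (hmem e₁ (by simp)) (hmem e₂ (by simp)) hend
      cases a <;> cases b <;> simp_all [ι₀]
    · obtain ⟨⟨-, hend₁₂⟩, hchain⟩ := List.isChain_cons_cons.mp hchain
      obtain ⟨⟨-, hend₂₃⟩, -⟩ := List.isChain_cons_cons.mp hchain
      obtain ⟨_, _, _, -, -, -, he₂⟩ :=
        phi1_edges_adjacent (hmem e₁ (by simp)) (hmem e₂ (by simp)) hend₁₂
      obtain ⟨_, _, _, -, -, he₂', -⟩ :=
        phi1_edges_adjacent (hmem e₂ (by simp)) (hmem e₃ (by simp)) hend₂₃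
      simp [he₂] at he₂'
  · rintro ⟨x, y, z, hxy, hyz, rfl, rfl, rfl⟩
    refine ⟨⟨by simp, ?_, List.isChain_pair.mpr ⟨by simp, rfl⟩⟩, rfl, rfl⟩
    simp [edgeMem_phi1_iff, hxy, hyz]

theorem phi1_respects_comp_general (X Y Z : Type)
    (θ : Set (X × Y)) (η : Set (Y × Z)) :
    Phi1 (relComp η θ) = comp (Phi1 η) (Phi1 θ) ∧
    Function.Injective (Phi1 (X := X) (Y := Y)) := by
  refine ⟨?_, phi1_injective⟩
  ext ⟨a, b⟩
  constructor
  · rintro ⟨⟨x, z⟩, ⟨y, hxy, hyz⟩, hab⟩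
    obtain ⟨rfl, rfl⟩ := Prod.mk.inj hab
    exact ⟨_, connectsVia_phi1_iff.mpr ⟨x, y, z, hxy, hyz, rfl, rfl, rfl⟩⟩
  · rintro ⟨L, hL⟩
    obtain ⟨x, y, z, hxy, hyz, rfl, rfl, -⟩ := connectsVia_phi1_iff.mp hL
    exact ⟨(x, z), ⟨y, hxy, hyz⟩, rfl⟩

/-- `Φ₁` is an inclusion of the category of binary relations into the category
of PBRs respecting composition. -/
theorem phi1_respects_comp (X Y Z : Type) [Fintype X] [Fintype Y] [Fintype Z]
    (θ : Set (X × Y)) (η : Set (Y × Z)) :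
    Phi1 (relComp η θ) = comp (Phi1 η) (Phi1 θ) ∧
    Function.Injective (Phi1 (X := X) (Y := Y)) :=
  phi1_respects_comp_general X Y Z θ η

end PBRPaper
end

section
/- Let ε̂_X denote the PBR on (X,X) whose edges are exactly (x^(d),x^(c)) for x ∈ X. For finite sets X, Y and a PBR α on (X,Y), the following are equivalent: (i) there exists a PBR β on (X,Y) such that α = ε̂_Y∘β∘ε̂_X; (ii) every edge (a,b) of α has a in the domain copy of X and b in the codomain copy of Y. Hence the image of the inclusion Φ₁ of binary relations into PBRs equals the idempotent subcategory 𝔓𝔅_e determined by the idempotents ε̂_X, i.e. Φ₁(𝔅)(X,Y) = ε̂_Y∘𝔓𝔅(X,Y)∘ε̂_X. -/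
namespace PBRPaper

variable {X Y Z : Type}

/-- The idempotent PBR `ε̂_X`, with edges exactly `(x^(d), x^(c))` for `x ∈ X`. -/
def epsHat (X : Type) : PBR X X :=
  {p | ∃ x : X, p = (Sum.inl x, Sum.inr x)}

/-!
If no edge of `β` ends where an edge of `α` starts, an `(α,β)`-connected sequence has at most
two edges, an `α`-edge followed by a `β`-edge. Both `ε̂_X` on the right and `ε̂_Y` on the left
are of this kind, and composing with them merely discards the edges of the other factor that
end in the domain copy, resp. start in the codomain copy. Hence `ε̂_Y ∘ β ∘ ε̂_X` consists of
the edges of `β` from the domain copy to the codomain copy, and these PBRs are exactly the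
images `Φ₁ θ`.
-/

section NoReturn

variable {α : PBR X Y} {β : PBR Y Z}

lemma EdgeMem.ne_of_true_of_false (hβα : ∀ q ∈ β, ∀ p ∈ α, ι₂ q.2 ≠ ι₁ p.1)
    {e f : Bool × (X ⊕ Y ⊕ Z) × (X ⊕ Y ⊕ Z)} (he : EdgeMem α β e) (hf : EdgeMem α β f)
    (he₁ : e.1 = true) (hf₁ : f.1 = false) : e.2.2 ≠ f.2.1 := by
  obtain ⟨_, u, v⟩ := e
  obtain ⟨_, u', v'⟩ := f
  subst he₁ hf₁
  obtain ⟨q, hq, -, rfl⟩ := he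
  obtain ⟨p, hp, rfl, -⟩ := hf
  exact hβα q hq p hp

lemma mem_comp_iff_of_forall_ne (hβα : ∀ q ∈ β, ∀ p ∈ α, ι₂ q.2 ≠ ι₁ p.1) {a b : X ⊕ Z} :
    (a, b) ∈ comp β α ↔
      (∃ p ∈ α, ι₁ p.1 = ι₀ a ∧ ι₁ p.2 = (ι₀ b : X ⊕ Y ⊕ Z)) ∨
      (∃ q ∈ β, ι₂ q.1 = ι₀ a ∧ ι₂ q.2 = (ι₀ b : X ⊕ Y ⊕ Z)) ∨
      ∃ p ∈ α, ∃ q ∈ β, ι₁ p.1 = ι₀ a ∧ ι₁ p.2 = (ι₂ q.1 : X ⊕ Y ⊕ Z) ∧ ι₂ q.2 = ι₀ b := by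
  constructor
  · rintro ⟨L, ⟨hne, hmem, hch⟩, hhead, hlast⟩
    have step := fun e f he hf => EdgeMem.ne_of_true_of_false hβα (hmem e he) (hmem f hf)
    match L, hmem, hch with
    | [], _, _ => exact absurd rfl hne
    | [⟨false, _, _⟩], hmem, _ =>
      obtain ⟨p, hp, rfl, rfl⟩ := hmem _ (List.mem_singleton_self _)
      simp only [List.head?_cons, List.getLast?_singleton, Option.map_some, Option.some_inj]
        at hhead hlast
      exact Or.inl ⟨p, hp, hhead, hlast⟩
    | [⟨true, _, _⟩], hmem, _ =>
      obtain ⟨q, hq, rfl, rfl⟩ := hmem _ (List.mem_singleton_self _)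
      simp only [List.head?_cons, List.getLast?_singleton, Option.map_some, Option.some_inj]
        at hhead hlast
      exact Or.inr (Or.inl ⟨q, hq, hhead, hlast⟩)
    | [⟨false, u, v⟩, ⟨true, u', v'⟩], hmem, hch =>
      obtain ⟨p, hp, rfl, rfl⟩ := hmem (false, u, v) (by simp)
      obtain ⟨q, hq, rfl, rfl⟩ := hmem (true, u', v') (by simp)
      simp only [List.head?_cons, List.getLast?_cons_cons, List.getLast?_singleton,
        Option.map_some, Option.some_inj] at hhead hlast
      exact Or.inr (Or.inr ⟨p, hp, q, hq, hhead, (List.isChain_cons_cons.mp hch).1.2, hlast⟩)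
    | ⟨true, _, _⟩ :: ⟨false, _, _⟩ :: _, _, hch =>
      exact (step _ _ (by simp) (by simp) rfl rfl (List.isChain_cons_cons.mp hch).1.2).elim
    | ⟨false, _, _⟩ :: ⟨true, _, _⟩ :: ⟨false, _, _⟩ :: _, _, hch =>
      have hfg := (List.isChain_cons_cons.mp (List.isChain_cons_cons.mp hch).2).1
      exact (step _ _ (by simp) (by simp) rfl rfl hfg.2).elim
    | ⟨false, _, _⟩ :: ⟨false, _, _⟩ :: _, _, hch | ⟨true, _, _⟩ :: ⟨true, _, _⟩ :: _, _, hch =>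
      exact absurd rfl (List.isChain_cons_cons.mp hch).1.1
    | ⟨false, _, _⟩ :: ⟨true, _, _⟩ :: ⟨true, _, _⟩ :: _, _, hch =>
      exact absurd rfl (List.isChain_cons_cons.mp (List.isChain_cons_cons.mp hch).2).1.1
  · rintro (⟨p, hp, ha, hb⟩ | ⟨q, hq, ha, hb⟩ | ⟨p, hp, q, hq, ha, hpq, hb⟩)
    · exact ⟨[(false, ι₁ p.1, ι₁ p.2)], ⟨List.cons_ne_nil _ _, by simpa using ⟨p, hp, rfl, rfl⟩,
        List.isChain_singleton _⟩, by simp [ha], by simp [hb]⟩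
    · exact ⟨[(true, ι₂ q.1, ι₂ q.2)], ⟨List.cons_ne_nil _ _, by simpa using ⟨q, hq, rfl, rfl⟩,
        List.isChain_singleton _⟩, by simp [ha], by simp [hb]⟩
    · refine ⟨[(false, ι₁ p.1, ι₁ p.2), (true, ι₂ q.1, ι₂ q.2)],
        ⟨List.cons_ne_nil _ _, ?_, ?_⟩, by simp [ha], by simp [hb]⟩
      · simpa using ⟨⟨p, hp, rfl, rfl⟩, ⟨q, hq, rfl, rfl⟩⟩
      · exact List.isChain_cons_cons.mpr ⟨⟨by simp, hpq⟩, List.isChain_singleton _⟩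

end NoReturn

lemma comp_epsHat_right (β : PBR X Y) : comp β (epsHat X) = {p ∈ β | p.2.isRight} := by
  have h : ∀ q ∈ β, ∀ p ∈ epsHat X, ι₂ q.2 ≠ ι₁ p.1 := by
    rintro q - _ ⟨x, rfl⟩
    cases q.2 <;> simp [ι₁, ι₂]
  ext ⟨a, b⟩
  rw [mem_comp_iff_of_forall_ne h]
  rcases a with a | a <;> rcases b with b | b <;> simp [epsHat, ι₀, ι₁, ι₂]

lemma comp_epsHat_left (α : PBR X Y) : comp (epsHat Y) α = {p ∈ α | p.1.isLeft} := by
  have h : ∀ q ∈ epsHat Y, ∀ p ∈ α, ι₂ q.2 ≠ ι₁ p.1 := by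
    rintro _ ⟨y, rfl⟩ p -
    cases p.1 <;> simp [ι₁, ι₂]
  ext ⟨a, b⟩
  rw [mem_comp_iff_of_forall_ne h]
  rcases a with a | a <;> rcases b with b | b <;> simp [epsHat, ι₀, ι₁, ι₂]

lemma comp_epsHat_comp_epsHat (β : PBR X Y) :
    comp (epsHat Y) (comp β (epsHat X)) = {p ∈ β | p.1.isLeft ∧ p.2.isRight} := by
  ext p
  simp only [comp_epsHat_right, comp_epsHat_left, Set.mem_ofPred_eq]
  tauto

lemma exists_eq_inl_inr_iff {A B C D : Type*} {p : (A ⊕ B) × (C ⊕ D)} :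
    (∃ a d, p = (Sum.inl a, Sum.inr d)) ↔ p.1.isLeft ∧ p.2.isRight := by
  obtain ⟨_ | _, _ | _⟩ := p <;> simp

lemma exists_eq_comp_epsHat_iff (α : PBR X Y) :
    (∃ β : PBR X Y, α = comp (epsHat Y) (comp β (epsHat X))) ↔
      ∀ p ∈ α, ∃ (x : X) (y : Y), p = (Sum.inl x, Sum.inr y) := by
  simp only [comp_epsHat_comp_epsHat, exists_eq_inl_inr_iff]
  constructor
  · rintro ⟨β, rfl⟩ p hp
    exact hp.2
  · exact fun h => ⟨α, (Set.sep_eq_self_iff_mem_true.mpr h).symm⟩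

lemma exists_eq_phi1_iff (α : PBR X Y) :
    (∃ θ : Set (X × Y), α = Phi1 θ) ↔ ∀ p ∈ α, ∃ (x : X) (y : Y), p = (Sum.inl x, Sum.inr y) := by
  constructor
  · rintro ⟨θ, rfl⟩ _ ⟨q, -, rfl⟩
    exact ⟨q.1, q.2, rfl⟩
  · refine fun h => ⟨{q | (Sum.inl q.1, Sum.inr q.2) ∈ α}, Set.ext fun p => ⟨fun hp => ?_, ?_⟩⟩
    · obtain ⟨x, y, rfl⟩ := h p hp
      exact ⟨(x, y), hp, rfl⟩
    · rintro ⟨q, hq, rfl⟩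
      exact hq

theorem phi1_image_is_idempotent_subcategory_general
    (X Y : Type) (α : PBR X Y) :
    ((∃ β : PBR X Y, α = comp (epsHat Y) (comp β (epsHat X))) ↔
      ∀ p ∈ α, ∃ (x : X) (y : Y), p = (Sum.inl x, Sum.inr y)) ∧
    ((∃ θ : Set (X × Y), α = Phi1 θ) ↔
      ∃ β : PBR X Y, α = comp (epsHat Y) (comp β (epsHat X))) :=
  ⟨exists_eq_comp_epsHat_iff α, (exists_eq_phi1_iff α).trans (exists_eq_comp_epsHat_iff α).symm⟩

/-- A PBR `α` on `(X,Y)` is of the form `ε̂_Y ∘ β ∘ ε̂_X` iff every edge of `α`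
goes from the domain copy of `X` to the codomain copy of `Y`;
hence `Φ₁(𝔅)(X,Y) = ε̂_Y ∘ 𝔓𝔅(X,Y) ∘ ε̂_X`. -/
theorem phi1_image_is_idempotent_subcategory
    (X Y : Type) [Fintype X] [Fintype Y] (α : PBR X Y) :
    ((∃ β : PBR X Y, α = comp (epsHat Y) (comp β (epsHat X))) ↔
      ∀ p ∈ α, ∃ (x : X) (y : Y), p = (Sum.inl x, Sum.inr y)) ∧
    ((∃ θ : Set (X × Y), α = Phi1 θ) ↔
      ∃ β : PBR X Y, α = comp (epsHat Y) (comp β (epsHat X))) :=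
  phi1_image_is_idempotent_subcategory_general X Y α

end PBRPaper
end

section
/- Let α be an equivalence relation on X ⊕ Y and β an equivalence relation on Y ⊕ Z (X, Y, Z finite sets), regarded as PBRs on (X,Y) and (Y,Z) respectively. Then for all a, b ∈ X ⊕ Z, the PBR composition β∘α contains the edge (a,b) if and only if there exist k ∈ ℕ₀ and a sequence a = a₀, a₁, …, a_k = b of elements of X ⊕ Y ⊕ Z such that every two consecutive elements a_i, a_{i+1} are related by α or by β (regarded inside X ⊕ Y ⊕ Z). In particular, the PBR composition of two equivalence relations equals the PBR associated to the composition of the corresponding partitions in the partition category, so the assignment Ψ sending a partition to its equivalence relation respects composition. -/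
/-!
A connected sequence is in particular a path of `α`- and `β`-steps through `X ⊕ Y ⊕ Z`.
Conversely, a path of steps becomes a connected sequence once every maximal run of steps
from the same relation is merged into a single edge, which transitivity allows; the path of
length zero is covered by a one-edge sequence, which reflexivity provides.
-/


namespace PBRPaper

variable {X Y Z : Type}

/-- Two elements of `X ⊕ Y ⊕ Z` are related by `α` or by `β`
(each regarded inside `X ⊕ Y ⊕ Z`). -/
def step {X Y Z : Type} (α : PBR X Y) (β : PBR Y Z) (u v : X ⊕ Y ⊕ Z) : Prop :=
  (∃ p ∈ α, ι₁ p.1 = u ∧ ι₁ p.2 = v) ∨ (∃ p ∈ β, ι₂ p.1 = u ∧ ι₂ p.2 = v)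

theorem reflTransGen_iff_exists_fin_path {V : Type} (r : V → V → Prop) (u v : V) :
    Relation.ReflTransGen r u v ↔
      ∃ (k : ℕ) (c : Fin (k + 1) → V),
        c 0 = u ∧ c (Fin.last k) = v ∧ ∀ i : Fin k, r (c i.castSucc) (c i.succ) := by
  constructor
  · intro h
    induction h using Relation.ReflTransGen.head_induction_on with
    | refl => exact ⟨0, fun _ => v, rfl, rfl, Fin.elim0⟩
    | head huw _ ih =>
      obtain ⟨k, c, rfl, hlast, hc⟩ := ih
      refine ⟨k + 1, Fin.cons _ c, rfl, by simpa using hlast, Fin.cases ?_ fun i => ?_⟩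
      · simpa using huw
      · simpa [← Fin.succ_castSucc] using hc i
  · rintro ⟨k, c, rfl, rfl, hc⟩
    induction k with
    | zero => rfl
    | succ k ih =>
      refine .head (hc 0) ?_
      have := ih (Fin.tail c) fun i => by simpa [Fin.tail, ← Fin.succ_castSucc] using hc i.succ
      simpa [Fin.tail, Fin.succ_last] using this

theorem exists_mem_trans_of_injective {A B : Type} {f : A → B} (hf : f.Injective)
    {s : Set (A × A)} (hs : IsTrans A fun a b => (a, b) ∈ s) {u w v : B}
    (huw : ∃ p ∈ s, f p.1 = u ∧ f p.2 = w) (hwv : ∃ p ∈ s, f p.1 = w ∧ f p.2 = v) :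
    ∃ p ∈ s, f p.1 = u ∧ f p.2 = v := by
  obtain ⟨⟨a, b⟩, hab, rfl, hbw⟩ := huw
  obtain ⟨⟨b', c⟩, hbc, hb'w, rfl⟩ := hwv
  obtain rfl : b = b' := hf (hbw.trans hb'w.symm)
  exact ⟨(a, c), hs.trans _ _ _ hab hbc, rfl, rfl⟩

theorem ι₁_injective : (ι₁ : X ⊕ Y → X ⊕ Y ⊕ Z).Injective := by
  rintro (_ | _) (_ | _) h <;> simp_all [ι₁]

theorem ι₂_injective : (ι₂ : Y ⊕ Z → X ⊕ Y ⊕ Z).Injective := by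
  rintro (_ | _) (_ | _) h <;> simp_all [ι₂]

section Joins

variable {α : PBR X Y} {β : PBR Y Z}

def Joins (α : PBR X Y) (β : PBR Y Z) (u v : X ⊕ Y ⊕ Z) : Prop :=
  ∃ L, IsConnSeq α β L ∧ L.head?.map (fun e => e.2.1) = some u ∧
    L.getLast?.map (fun e => e.2.2) = some v

theorem step_iff_exists_edgeMem {u v : X ⊕ Y ⊕ Z} :
    step α β u v ↔ ∃ b : Bool, EdgeMem α β (b, u, v) := by
  constructor
  · rintro (h | h)
    exacts [⟨false, h⟩, ⟨true, h⟩]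
  · rintro ⟨_ | _, h⟩
    exacts [.inl h, .inr h]

theorem EdgeMem.trans (hα : IsTrans (X ⊕ Y) fun a b => (a, b) ∈ α)
    (hβ : IsTrans (Y ⊕ Z) fun a b => (a, b) ∈ β) {b : Bool} {u w v : X ⊕ Y ⊕ Z}
    (huw : EdgeMem α β (b, u, w)) (hwv : EdgeMem α β (b, w, v)) : EdgeMem α β (b, u, v) := by
  cases b
  · exact exists_mem_trans_of_injective ι₁_injective hα huw hwv
  · exact exists_mem_trans_of_injective ι₂_injective hβ huw hwv

theorem joins_of_edgeMem {e : Bool × (X ⊕ Y ⊕ Z) × (X ⊕ Y ⊕ Z)} (he : EdgeMem α β e) :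
    Joins α β e.2.1 e.2.2 :=
  ⟨[e], ⟨List.cons_ne_nil _ _, by simpa using he, List.isChain_singleton e⟩, rfl, rfl⟩

theorem joins_ι₀_self (hα : Std.Refl fun a b => (a, b) ∈ α)
    (hβ : Std.Refl fun a b => (a, b) ∈ β) (a : X ⊕ Z) :
    Joins α β (ι₀ a) (ι₀ a) := by
  cases a with
  | inl x => exact joins_of_edgeMem (e := (false, _, _)) ⟨(.inl x, .inl x), hα.refl _, rfl, rfl⟩
  | inr z => exact joins_of_edgeMem (e := (true, _, _)) ⟨(.inr z, .inr z), hβ.refl _, rfl, rfl⟩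

theorem Joins.reflTransGen {u v : X ⊕ Y ⊕ Z} (h : Joins α β u v) :
    Relation.ReflTransGen (step α β) u v := by
  obtain ⟨L, ⟨hne, hmem, hchain⟩, hhead, hlast⟩ := h
  induction L generalizing u with
  | nil => exact absurd rfl hne
  | cons e rest ih =>
    obtain rfl : e.2.1 = u := by simpa using hhead
    have he : step α β e.2.1 e.2.2 := step_iff_exists_edgeMem.mpr ⟨e.1, hmem e List.mem_cons_self⟩
    cases rest with
    | nil =>
      obtain rfl : e.2.2 = v := by simpa using hlast
      exact .single he
    | cons f rest =>
      obtain ⟨⟨-, hef⟩, hchain⟩ := List.isChain_cons_cons.mp hchain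
      exact .head he <| ih (List.cons_ne_nil _ _) (fun x hx => hmem x (by simp [hx]))
        hchain (by simp [hef]) (by simpa using hlast)

theorem Joins.head (hα : IsTrans (X ⊕ Y) fun a b => (a, b) ∈ α)
    (hβ : IsTrans (Y ⊕ Z) fun a b => (a, b) ∈ β) {u w v : X ⊕ Y ⊕ Z}
    (huw : step α β u w) (h : Joins α β w v) : Joins α β u v := by
  obtain ⟨b, hb⟩ := step_iff_exists_edgeMem.mp huw
  obtain ⟨_ | ⟨e, rest⟩, ⟨hne, hmem, hchain⟩, hhead, hlast⟩ := h
  · exact absurd rfl hne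
  obtain rfl : e.2.1 = w := by simpa using hhead
  by_cases hbe : b = e.1
  · -- same relation as the first edge: merge the two edges by transitivity
    subst hbe
    refine ⟨(e.1, u, e.2.2) :: rest, ⟨List.cons_ne_nil _ _, ?_, ?_⟩, rfl, ?_⟩
    · exact List.forall_mem_cons.mpr
        ⟨hb.trans hα hβ (hmem e List.mem_cons_self), fun f hf => hmem f (List.mem_cons_of_mem _ hf)⟩
    · exact List.IsChain.imp_head (x := e) (y := (e.1, u, e.2.2)) id hchain
    · cases rest <;> simpa using hlast
  · refine ⟨(b, u, e.2.1) :: e :: rest, ⟨List.cons_ne_nil _ _, ?_, ?_⟩, rfl, ?_⟩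
    · exact List.forall_mem_cons.mpr ⟨hb, hmem⟩
    · exact List.isChain_cons_cons.mpr ⟨⟨hbe, rfl⟩, hchain⟩
    · simpa using hlast

theorem Joins.of_reflTransGen (hα : IsTrans (X ⊕ Y) fun a b => (a, b) ∈ α)
    (hβ : IsTrans (Y ⊕ Z) fun a b => (a, b) ∈ β) {u v : X ⊕ Y ⊕ Z}
    (h : Relation.ReflTransGen (step α β) u v) (hv : Joins α β v v) : Joins α β u v := by
  induction h using Relation.ReflTransGen.head_induction_on with
  | refl => exact hv
  | head huw _ ih => exact ih.head hα hβ huw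

end Joins

theorem pbr_comp_of_equivalences_general (X Y Z : Type)
    (α : PBR X Y) (β : PBR Y Z)
    (hα : Equivalence fun a b : X ⊕ Y => (a, b) ∈ α)
    (hβ : Equivalence fun a b : Y ⊕ Z => (a, b) ∈ β) :
    ∀ a b : X ⊕ Z, (a, b) ∈ comp β α ↔
      ∃ (k : ℕ) (c : Fin (k + 1) → X ⊕ Y ⊕ Z),
        c 0 = ι₀ a ∧ c (Fin.last k) = ι₀ b ∧
        ∀ i : Fin k, step α β (c i.castSucc) (c i.succ) := by
  intro a b
  show Joins α β (ι₀ a) (ι₀ b) ↔ _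
  rw [← reflTransGen_iff_exists_fin_path]
  exact ⟨Joins.reflTransGen, fun h => Joins.of_reflTransGen ⟨fun _ _ _ => hα.trans⟩
    ⟨fun _ _ _ => hβ.trans⟩ h (joins_ι₀_self ⟨hα.refl⟩ ⟨hβ.refl⟩ b)⟩

/-- For equivalence relations `α` on `X ⊕ Y` and `β` on `Y ⊕ Z` regarded as
PBRs, the PBR composition `β∘α` contains `(a,b)` iff `a` and `b` are joined by
a finite sequence in `X ⊕ Y ⊕ Z` whose consecutive members are related by `α`
or by `β`; so the assignment `Ψ` from partitions to PBRs respects composition. -/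
theorem pbr_comp_of_equivalences (X Y Z : Type) [Fintype X] [Fintype Y] [Fintype Z]
    (α : PBR X Y) (β : PBR Y Z)
    (hα : Equivalence fun a b : X ⊕ Y => (a, b) ∈ α)
    (hβ : Equivalence fun a b : Y ⊕ Z => (a, b) ∈ β) :
    ∀ a b : X ⊕ Z, (a, b) ∈ comp β α ↔
      ∃ (k : ℕ) (c : Fin (k + 1) → X ⊕ Y ⊕ Z),
        c 0 = ι₀ a ∧ c (Fin.last k) = ι₀ b ∧
        ∀ i : Fin k, step α β (c i.castSucc) (c i.succ) :=
  pbr_comp_of_equivalences_general X Y Z α β hα hβ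

end PBRPaper
end

section
/- Let ℵ be a composable sequence of PBRs and let ω' and ω'' be equivalent ℵ-frothy cycles. Then there exists an ℵ-frothy cycle ω containing all the edges of ω' and all the edges of ω'' (each edge occurring in ω as an edge of the same PBR of ℵ as in ω', respectively ω''). -/
/-!
Two frothy cycles through a common edge `e` splice into one: rotate both so that they start
at `e` and concatenate them; every junction of the result is a junction of one of the two
cycles. Elementary equivalence is symmetric, so equivalence is its reflexive-transitive
closure, and along a chain of elementarily equivalent cycles we splice each new cycle into the
supercycle built so far, at the edge it shares with its predecessor.
-/

namespace PBRPaper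

variable {k : ℕ}

/-- The ambient disjoint union `X₁ ⊕ ⋯ ⊕ X_{k+1}` of a composable sequence. -/
def Amb (Xs : Fin (k + 1) → Type) : Type := (j : Fin (k + 1)) × Xs j

/-- The inclusion of `X_i ⊕ X_{i+1}` into the ambient disjoint union. -/
def embG (Xs : Fin (k + 1) → Type) (i : Fin k) :
    Xs i.castSucc ⊕ Xs i.succ → Amb Xs :=
  Sum.elim (fun a => ⟨i.castSucc, a⟩) fun a => ⟨i.succ, a⟩

/-- The inclusion of `X₁ ⊕ X_{k+1}` into the ambient disjoint union. -/
def outerG (Xs : Fin (k + 1) → Type) : Xs 0 ⊕ Xs (Fin.last k) → Amb Xs :=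
  Sum.elim (fun a => ⟨0, a⟩) fun a => ⟨Fin.last k, a⟩

/-- Labeled edges of the composable sequence `ℵ = (α₁,…,α_k)` in the ambient
disjoint union: the label `i : Fin k` records which PBR an edge comes from. -/
def EdgeMemG (Xs : Fin (k + 1) → Type)
    (A : ∀ i : Fin k, PBR (Xs i.castSucc) (Xs i.succ))
    (e : Fin k × Amb Xs × Amb Xs) : Prop :=
  ∃ p ∈ A e.1, embG Xs e.1 p.1 = e.2.1 ∧ embG Xs e.1 p.2 = e.2.2

/-- An `ℵ`-connected sequence: a nonempty list of labeled edges, no two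
successive edges from the same PBR, endpoints matching up. -/
def IsConnSeqG (Xs : Fin (k + 1) → Type)
    (A : ∀ i : Fin k, PBR (Xs i.castSucc) (Xs i.succ))
    (L : List (Fin k × Amb Xs × Amb Xs)) : Prop :=
  L ≠ [] ∧ (∀ e ∈ L, EdgeMemG Xs A e) ∧
    L.Chain' fun e f => e.1 ≠ f.1 ∧ e.2.2 = f.2.1

/-- `L` is an `ℵ`-connected sequence connecting `a` to `b`,
where `a, b ∈ X₁ ⊕ X_{k+1}`. -/
def ConnectsViaG (Xs : Fin (k + 1) → Type)
    (A : ∀ i : Fin k, PBR (Xs i.castSucc) (Xs i.succ))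
    (L : List (Fin k × Amb Xs × Amb Xs)) (a b : Xs 0 ⊕ Xs (Fin.last k)) : Prop :=
  IsConnSeqG Xs A L ∧ L.head?.map (fun e => e.2.1) = some (outerG Xs a) ∧
    L.getLast?.map (fun e => e.2.2) = some (outerG Xs b)

/-- An `ℵ`-frothy labeled edge: an edge of the corresponding PBR occurring in
no `ℵ`-connected sequence connecting two elements of `X₁ ⊕ X_{k+1}`. -/
def IsFrothyG (Xs : Fin (k + 1) → Type)
    (A : ∀ i : Fin k, PBR (Xs i.castSucc) (Xs i.succ))
    (e : Fin k × Amb Xs × Amb Xs) : Prop :=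
  EdgeMemG Xs A e ∧ ∀ L a b, ConnectsViaG Xs A L a b → e ∉ L

/-- An `ℵ`-frothy cycle. -/
def IsFrothyCycleG (Xs : Fin (k + 1) → Type)
    (A : ∀ i : Fin k, PBR (Xs i.castSucc) (Xs i.succ))
    (L : List (Fin k × Amb Xs × Amb Xs)) : Prop :=
  IsConnSeqG Xs A L ∧ 2 ≤ L.length ∧
    L.getLast?.map (fun e => e.2.2) = L.head?.map (fun e => e.2.1) ∧
    L.head?.map (fun e => e.1) ≠ L.getLast?.map (fun e => e.1) ∧
    ∀ e ∈ L, IsFrothyG Xs A e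

/-- Equivalence of `ℵ`-frothy cycles: the smallest equivalence relation
containing elementary equivalence (sharing a common edge of the same PBR; the
labels on edges record the PBR, and naive equivalence is subsumed since a
cycle shares all its edges with each of its cyclic permutations). -/
def CycleEquivG (Xs : Fin (k + 1) → Type)
    (A : ∀ i : Fin k, PBR (Xs i.castSucc) (Xs i.succ))
    (L L' : List (Fin k × Amb Xs × Amb Xs)) : Prop :=
  Relation.EqvGen
    (fun M M' => IsFrothyCycleG Xs A M ∧ IsFrothyCycleG Xs A M' ∧
      ∃ e, e ∈ M ∧ e ∈ M') L L'

section Splicing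

variable (Xs : Fin (k + 1) → Type) (A : ∀ i : Fin k, PBR (Xs i.castSucc) (Xs i.succ))

def Successive (e f : Fin k × Amb Xs × Amb Xs) : Prop :=
  e.1 ≠ f.1 ∧ e.2.2 = f.2.1

def ElemEquivG (M M' : List (Fin k × Amb Xs × Amb Xs)) : Prop :=
  IsFrothyCycleG Xs A M ∧ IsFrothyCycleG Xs A M' ∧ ∃ e, e ∈ M ∧ e ∈ M'

instance : Std.Symm (ElemEquivG Xs A) :=
  ⟨fun _ _ ⟨hM, hM', e, he, he'⟩ => ⟨hM', hM, e, he', he⟩⟩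

variable {Xs A}

theorem isFrothyCycleG_iff {L : List (Fin k × Amb Xs × Amb Xs)} (hL : L ≠ []) :
    IsFrothyCycleG Xs A L ↔
      2 ≤ L.length ∧ (∀ e ∈ L, IsFrothyG Xs A e) ∧ Cycle.Chain (Successive Xs) L := by
  obtain ⟨a, l, rfl⟩ := List.exists_cons_of_ne_nil hL
  rw [Cycle.chain_ne_nil _ hL, List.isChain_cons_cons]
  simp only [IsFrothyCycleG, IsConnSeqG, List.getLast?_eq_some_getLast hL, List.head?_cons,
    Option.map_some, ne_eq, Option.some.injEq]
  constructor
  · rintro ⟨⟨-, -, hchain⟩, hlen, hwrap, hlab, hfroth⟩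
    exact ⟨hlen, hfroth, ⟨fun h => hlab h.symm, hwrap⟩, hchain⟩
  · rintro ⟨hlen, hfroth, ⟨hlab, hwrap⟩, hchain⟩
    exact ⟨⟨hL, fun e he => (hfroth e he).1, hchain⟩, hlen, hwrap, fun h => hlab h.symm, hfroth⟩

theorem exists_isFrothyCycleG_supset_of_mem {P Q : List (Fin k × Amb Xs × Amb Xs)}
    (hP : IsFrothyCycleG Xs A P) (hQ : IsFrothyCycleG Xs A Q)
    {e : Fin k × Amb Xs × Amb Xs} (heP : e ∈ P) (heQ : e ∈ Q) :
    ∃ ω, IsFrothyCycleG Xs A ω ∧ P ⊆ ω ∧ Q ⊆ ω := by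
  obtain ⟨p₁, p₂, rfl⟩ := List.append_of_mem heP
  obtain ⟨q₁, q₂, rfl⟩ := List.append_of_mem heQ
  obtain ⟨-, hPfroth, hPchain⟩ := (isFrothyCycleG_iff (by simp)).mp hP
  obtain ⟨-, hQfroth, hQchain⟩ := (isFrothyCycleG_iff (by simp)).mp hQ
  rw [Cycle.coe_eq_coe.mpr List.isRotated_append, List.cons_append, Cycle.chain_coe_cons]
    at hPchain hQchain
  refine ⟨e :: (p₂ ++ p₁ ++ e :: (q₂ ++ q₁)), ?_, ?_, ?_⟩
  · refine (isFrothyCycleG_iff (List.cons_ne_nil _ _)).mpr ⟨by simp only [List.length_cons, List.length_append]; omega, ?_, ?_⟩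
    · intro f hf
      have hPQ : f ∈ p₁ ++ e :: p₂ ∨ f ∈ q₁ ++ e :: q₂ := by
        simp only [List.mem_cons, List.mem_append] at hf ⊢
        tauto
      exact hPQ.elim (hPfroth f) (hQfroth f)
    · rw [Cycle.chain_coe_cons, List.append_assoc, List.cons_append, List.isChain_cons_split]
      exact ⟨hPchain, hQchain⟩
  all_goals intro f; simp only [List.mem_append, List.mem_cons]; tauto

theorem exists_isFrothyCycleG_supset_of_reflTransGen {L M : List (Fin k × Amb Xs × Amb Xs)}
    (hL : IsFrothyCycleG Xs A L) (hLM : Relation.ReflTransGen (ElemEquivG Xs A) L M) :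
    ∃ ω, IsFrothyCycleG Xs A ω ∧ L ⊆ ω ∧ M ⊆ ω := by
  induction hLM with
  | refl => exact ⟨L, hL, List.Subset.refl L, List.Subset.refl L⟩
  | tail _ hMN ih =>
    obtain ⟨ω₁, hω₁, hL₁, hM₁⟩ := ih
    obtain ⟨-, hN, e, heM, heN⟩ := hMN
    obtain ⟨ω, hω, h₁, hN'⟩ := exists_isFrothyCycleG_supset_of_mem hω₁ hN (hM₁ heM) heN
    exact ⟨ω, hω, List.Subset.trans hL₁ h₁, hN'⟩

end Splicing

theorem equivalent_frothy_cycles_common_supercycle_general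
    (k : ℕ) (Xs : Fin (k + 1) → Type)
    (A : ∀ i : Fin k, PBR (Xs i.castSucc) (Xs i.succ))
    (ω' ω'' : List (Fin k × Amb Xs × Amb Xs))
    (h' : IsFrothyCycleG Xs A ω')
    (h : CycleEquivG Xs A ω' ω'') :
    ∃ ω, IsFrothyCycleG Xs A ω ∧ (∀ e ∈ ω', e ∈ ω) ∧ ∀ e ∈ ω'', e ∈ ω := by
  refine exists_isFrothyCycleG_supset_of_reflTransGen h' ?_
  rw [← Relation.EqvGen.eqvGen_eq_reflTransGen]
  exact h

/-- If `ω'` and `ω''` are equivalent `ℵ`-frothy cycles, then there is an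
`ℵ`-frothy cycle `ω` containing all the edges of both (with the same labels,
i.e. as edges of the same PBRs). -/
theorem equivalent_frothy_cycles_common_supercycle
    (k : ℕ) (Xs : Fin (k + 1) → Type) [∀ j, Fintype (Xs j)]
    (A : ∀ i : Fin k, PBR (Xs i.castSucc) (Xs i.succ))
    (ω' ω'' : List (Fin k × Amb Xs × Amb Xs))
    (h' : IsFrothyCycleG Xs A ω') (h'' : IsFrothyCycleG Xs A ω'')
    (h : CycleEquivG Xs A ω' ω'') :
    ∃ ω, IsFrothyCycleG Xs A ω ∧ (∀ e ∈ ω', e ∈ ω) ∧ ∀ e ∈ ω'', e ∈ ω :=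
  equivalent_frothy_cycles_common_supercycle_general k Xs A ω' ω'' h' h

end PBRPaper
end

section
/- Call a PBR α on (X,Y) pure if every edge of α has one endpoint in the domain copy of X and the other endpoint in the codomain copy of Y (in either order). If α is a pure PBR on (X,Y) and β is a pure PBR on (Y,Z), then the composition β∘α is a pure PBR on (X,Z). Together with the fact that each identity ε_X is pure, pure PBRs form a subcategory of the category of PBRs. -/
namespace PBRPaper

variable {X Y Z : Type}

variable {X Y : Type} in
/-- A PBR is pure if every edge has one endpoint in the domain copy of `X` and
the other in the codomain copy of `Y` (in either order). -/
def IsPure (α : PBR X Y) : Prop :=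
  ∀ p ∈ α, (∃ (x : X) (y : Y), p = (Sum.inl x, Sum.inr y)) ∨
    ∃ (y : Y) (x : X), p = (Sum.inr y, Sum.inl x)

/-! When `α` and `β` are pure, every edge of either has exactly one endpoint in the copy of `Y`,
while two successive edges of a connected sequence, coming from different PBRs, can only meet in
`Y`. Hence a connected sequence between two points of `X ⊕ Z` has exactly two edges, passing
`X → Y → Z` or `Z → Y → X`, and the composite edge is pure. -/

/-- `none` on the copy of `Y`; on `X` and `Z` the label (as in `EdgeMem`) of the one PBR whose
edges can reach the point. -/
def side : X ⊕ Y ⊕ Z → Option Bool :=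
  Sum.elim (fun _ => some false) (Sum.elim (fun _ => none) fun _ => some true)

theorem side_ι₀ (a : X ⊕ Z) : side (ι₀ a : X ⊕ Y ⊕ Z) = some a.isRight := by
  cases a <;> rfl

variable {α : PBR X Y} {β : PBR Y Z} {e f : Bool × (X ⊕ Y ⊕ Z) × (X ⊕ Y ⊕ Z)}

theorem side_of_edgeMem (hα : IsPure α) (hβ : IsPure β) (he : EdgeMem α β e) :
    side e.2.1 = none ∧ side e.2.2 = some e.1 ∨ side e.2.1 = some e.1 ∧ side e.2.2 = none := by
  obtain ⟨_ | _, s, t⟩ := e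
  · obtain ⟨p, hp, rfl, rfl⟩ := he
    rcases hα p hp with ⟨x, y, rfl⟩ | ⟨y, x, rfl⟩ <;> simp [side, ι₁]
  · obtain ⟨p, hp, rfl, rfl⟩ := he
    rcases hβ p hp with ⟨y, z, rfl⟩ | ⟨z, y, rfl⟩ <;> simp [side, ι₂]

theorem side_junction_eq_none (hα : IsPure α) (hβ : IsPure β) (he : EdgeMem α β e)
    (hf : EdgeMem α β f) (hlabel : e.1 ≠ f.1) (hjoin : e.2.2 = f.2.1) : side e.2.2 = none := by
  rcases side_of_edgeMem hα hβ he with ⟨-, he₂⟩ | ⟨-, he₂⟩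
  · rw [hjoin] at he₂ ⊢
    rcases side_of_edgeMem hα hβ hf with ⟨hf₁, -⟩ | ⟨hf₁, -⟩
    · exact hf₁
    · exact absurd (Option.some.inj (he₂.symm.trans hf₁)) hlabel
  · exact he₂

theorem isRight_ne_of_connectsVia (hα : IsPure α) (hβ : IsPure β) {L : List _} {a b : X ⊕ Z}
    (h : ConnectsVia α β L a b) : a.isRight ≠ b.isRight := by
  obtain ⟨⟨hne, hmem, hchain⟩, hhead, hlast⟩ := h
  rcases L with _ | ⟨e₁, _ | ⟨e₂, _ | ⟨e₃, L⟩⟩⟩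
  · exact absurd rfl hne
  · simp only [List.head?_cons, List.getLast?_singleton, Option.map_some, Option.some.injEq]
      at hhead hlast
    rcases side_of_edgeMem hα hβ (hmem e₁ (by simp)) with h | h
    · simp [hhead, side_ι₀] at h
    · simp [hlast, side_ι₀] at h
  · simp only [List.head?_cons, List.getLast?_cons_cons, List.getLast?_singleton,
      Option.map_some, Option.some.injEq] at hhead hlast
    obtain ⟨⟨hlabel, hjoin⟩, -⟩ := List.isChain_cons_cons.mp hchain
    have h₁ := hmem e₁ (by simp)
    have h₂ := hmem e₂ (by simp)
    have hmid := side_junction_eq_none hα hβ h₁ h₂ hlabel hjoin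
    have ha : e₁.1 = a.isRight := by
      rcases side_of_edgeMem hα hβ h₁ with h | h
      · simp [hhead, side_ι₀] at h
      · simpa [hhead, side_ι₀] using h.1.symm
    have hb : e₂.1 = b.isRight := by
      rcases side_of_edgeMem hα hβ h₂ with h | h
      · simpa [hlast, side_ι₀] using h.2.symm
      · simp [← hjoin, hmid] at h
    exact ha ▸ hb ▸ hlabel
  · obtain ⟨⟨hlabel₁, hjoin₁⟩, hchain⟩ := List.isChain_cons_cons.mp hchain
    obtain ⟨⟨hlabel₂, hjoin₂⟩, -⟩ := List.isChain_cons_cons.mp hchain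
    have h₁ := hmem e₁ (by simp)
    have h₂ := hmem e₂ (by simp)
    have h₃ := hmem e₃ (by simp)
    have hsrc := side_junction_eq_none hα hβ h₁ h₂ hlabel₁ hjoin₁
    have htgt := side_junction_eq_none hα hβ h₂ h₃ hlabel₂ hjoin₂
    rcases side_of_edgeMem hα hβ h₂ with h | h
    · simp [htgt] at h
    · simp [← hjoin₁, hsrc] at h

theorem isPure_of_isRight_ne {γ : PBR X Z} (h : ∀ p ∈ γ, p.1.isRight ≠ p.2.isRight) :
    IsPure γ := by
  rintro ⟨a | a, b | b⟩ hp <;> simp_all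

theorem IsPure.comp (hα : IsPure α) (hβ : IsPure β) : IsPure (comp β α) :=
  isPure_of_isRight_ne fun _ ⟨_, hL⟩ => isRight_ne_of_connectsVia hα hβ hL

theorem isPure_eps (X : Type) : IsPure (eps X) := by
  rintro p ⟨x, rfl | rfl⟩
  exacts [Or.inl ⟨x, x, rfl⟩, Or.inr ⟨x, x, rfl⟩]

/-- The composition of pure PBRs is pure, and each identity `ε_X` is pure;
hence pure PBRs form a subcategory of the category of PBRs. -/
theorem pure_subcategory :
    (∀ (X Y Z : Type) [Fintype X] [Fintype Y] [Fintype Z]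
      (α : PBR X Y) (β : PBR Y Z),
      IsPure α → IsPure β → IsPure (comp β α)) ∧
    (∀ (X : Type) [Fintype X], IsPure (eps X)) :=
  ⟨fun _ _ _ _ _ _ _ _ hα hβ => hα.comp hβ, fun X _ => isPure_eps X⟩

end PBRPaper
end

section
/- The map α ↦ (α₁₂, α₂₁) is a bijection from the set of pure PBRs on (X,Y) onto the set of pairs (θ,γ) of binary relations with θ ⊆ X×Y and γ ⊆ Y×X, and it is compatible with composition: for a pure PBR α on (X,Y) and a pure PBR β on (Y,Z) one has (β∘α)₁₂ = β₁₂∘α₁₂ and (β∘α)₂₁ = α₂₁∘β₂₁, where ∘ on the right denotes usual composition of binary relations (η∘θ = {(x,z) : ∃y, (x,y) ∈ θ and (y,z) ∈ η}). Hence the category of pure PBRs is isomorphic to the double 𝔅^⋉ of the category of binary relations, whose morphisms X → Z are pairs (β,γ) with β ∈ 𝔅(X,Z), γ ∈ 𝔅^op(X,Z) and composition (β',γ')(β,γ) = (β'β, γγ'). -/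
/-! A pure `α` on `(X,Y)` only has edges between `X` and `Y`, and a pure `β` on `(Y,Z)` only
between `Y` and `Z`. An alternating sequence from `X ⊕ Z` back to `X ⊕ Z` therefore has to run
`X → Y → Z` or `Z → Y → X`: it consists of exactly one edge of each, so the off-diagonal blocks
of `β ∘ α` are the relational composites of those of `α` and `β`. Purity also says that `α` is
determined by these two blocks, and they can be prescribed freely. -/

namespace PBRPaper

variable {X Y Z : Type}

variable {X Y : Type} in
/-- The component `α₁₂ ⊆ X × Y` of a PBR `α` on `(X,Y)`. -/
def c12 (α : PBR X Y) : Set (X × Y) :=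
  {q | (Sum.inl q.1, Sum.inr q.2) ∈ α}

variable {X Y : Type} in
/-- The component `α₂₁ ⊆ Y × X` of a PBR `α` on `(X,Y)`. -/
def c21 (α : PBR X Y) : Set (Y × X) :=
  {q | (Sum.inr q.1, Sum.inl q.2) ∈ α}

open Sum

section Composition

variable {α : PBR X Y} {β : PBR Y Z}

theorem mem_comp_of_fst_snd {a b : X ⊕ Z} {p : (X ⊕ Y) × (X ⊕ Y)}
    {q : (Y ⊕ Z) × (Y ⊕ Z)} (hp : p ∈ α) (hq : q ∈ β) (ha : ι₁ p.1 = ι₀ a)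
    (hpq : ι₁ p.2 = ι₂ q.1) (hb : ι₂ q.2 = ι₀ b) : (a, b) ∈ comp β α := by
  refine ⟨[(false, ι₁ p.1, ι₁ p.2), (true, ι₂ q.1, ι₂ q.2)], ⟨List.cons_ne_nil _ _, ?_, ?_⟩,
    by simpa using ha, by simpa using hb⟩
  · simp only [List.mem_cons, List.not_mem_nil, or_false, forall_eq_or_imp, forall_eq]
    exact ⟨⟨p, hp, rfl, rfl⟩, ⟨q, hq, rfl, rfl⟩⟩
  · exact List.isChain_pair.2 ⟨nofun, hpq⟩

theorem mem_comp_of_snd_fst {a b : X ⊕ Z} {p : (X ⊕ Y) × (X ⊕ Y)}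
    {q : (Y ⊕ Z) × (Y ⊕ Z)} (hq : q ∈ β) (hp : p ∈ α) (ha : ι₂ q.1 = ι₀ a)
    (hqp : ι₂ q.2 = ι₁ p.1) (hb : ι₁ p.2 = ι₀ b) : (a, b) ∈ comp β α := by
  refine ⟨[(true, ι₂ q.1, ι₂ q.2), (false, ι₁ p.1, ι₁ p.2)], ⟨List.cons_ne_nil _ _, ?_, ?_⟩,
    by simpa using ha, by simpa using hb⟩
  · simp only [List.mem_cons, List.not_mem_nil, or_false, forall_eq_or_imp, forall_eq]
    exact ⟨⟨q, hq, rfl, rfl⟩, ⟨p, hp, rfl, rfl⟩⟩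
  · exact List.isChain_pair.2 ⟨nofun, hqp⟩

theorem EdgeMem.source_inl (hα : IsPure α) {b : Bool} {x : X} {v : X ⊕ Y ⊕ Z}
    (h : EdgeMem α β (b, inl x, v)) : b = false ∧ ∃ y, (inl x, inr y) ∈ α ∧ v = inr (inl y) := by
  cases b
  · obtain ⟨p, hp, hx, hv⟩ := h
    rcases hα p hp with ⟨x', y, rfl⟩ | ⟨y, x', rfl⟩
    · simp only [ι₁, elim_inl, elim_inr, inl.injEq] at hx hv
      subst hx hv
      exact ⟨rfl, y, hp, rfl⟩
    · simp [ι₁] at hx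
  · obtain ⟨⟨u | u, _⟩, _, hx, _⟩ := h <;> simp [ι₂] at hx

theorem EdgeMem.source_inr_inr (hβ : IsPure β) {b : Bool} {z : Z} {v : X ⊕ Y ⊕ Z}
    (h : EdgeMem α β (b, inr (inr z), v)) :
    b = true ∧ ∃ y, (inr z, inl y) ∈ β ∧ v = inr (inl y) := by
  cases b
  · obtain ⟨⟨u | u, _⟩, _, hz, _⟩ := h <;> simp [ι₁] at hz
  · obtain ⟨q, hq, hz, hv⟩ := h
    rcases hβ q hq with ⟨y, z', rfl⟩ | ⟨z', y, rfl⟩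
    · simp [ι₂] at hz
    · simp only [ι₂, elim_inl, elim_inr, inr.injEq] at hz hv
      subst hz hv
      exact ⟨rfl, y, hq, rfl⟩

theorem EdgeMem.false_source_inr_inl (hα : IsPure α) {y : Y} {v : X ⊕ Y ⊕ Z}
    (h : EdgeMem α β (false, inr (inl y), v)) : ∃ x, (inr y, inl x) ∈ α ∧ v = inl x := by
  obtain ⟨p, hp, hy, hv⟩ := h
  rcases hα p hp with ⟨x, y', rfl⟩ | ⟨y', x, rfl⟩
  · simp [ι₁] at hy
  · simp only [ι₁, elim_inl, elim_inr, inr.injEq, inl.injEq] at hy hv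
    subst hy hv
    exact ⟨x, hp, rfl⟩

theorem EdgeMem.true_source_inr_inl (hβ : IsPure β) {y : Y} {v : X ⊕ Y ⊕ Z}
    (h : EdgeMem α β (true, inr (inl y), v)) : ∃ z, (inl y, inr z) ∈ β ∧ v = inr (inr z) := by
  obtain ⟨q, hq, hy, hv⟩ := h
  rcases hβ q hq with ⟨y', z, rfl⟩ | ⟨z, y', rfl⟩
  · simp only [ι₂, elim_inl, elim_inr, inr.injEq, inl.injEq] at hy hv
    subst hy hv
    exact ⟨z, hq, rfl⟩
  · simp [ι₂] at hy

theorem ConnectsVia.inl_inr (hα : IsPure α) (hβ : IsPure β) {L} {x : X} {z : Z}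
    (h : ConnectsVia α β L (inl x) (inr z)) : ∃ y, (inl x, inr y) ∈ α ∧ (inl y, inr z) ∈ β := by
  obtain ⟨⟨-, hmem, hchain⟩, hhead, hlast⟩ := h
  rcases L with _ | ⟨⟨b₁, u₁, v₁⟩, _ | ⟨⟨b₂, u₂, v₂⟩, rest⟩⟩
  · simp at hhead
  · simp only [List.head?_cons, Option.map_some, Option.some.injEq, ι₀, elim_inl] at hhead
    subst hhead
    obtain ⟨-, y, -, rfl⟩ := (hmem _ List.mem_cons_self).source_inl hα
    simp [ι₀] at hlast
  · simp only [List.head?_cons, Option.map_some, Option.some.injEq, ι₀, elim_inl] at hhead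
    subst hhead
    obtain ⟨rfl, y, hxy, rfl⟩ := (hmem _ List.mem_cons_self).source_inl hα
    obtain ⟨⟨hb, rfl⟩, hchain⟩ := List.isChain_cons_cons.1 hchain
    obtain rfl : b₂ = true := by simpa using hb.symm
    obtain ⟨z', hyz, rfl⟩ :=
      (hmem _ (List.mem_cons_of_mem _ List.mem_cons_self)).true_source_inr_inl hβ
    cases rest with
    | nil =>
      obtain rfl : z' = z := by simpa [ι₀] using hlast
      exact ⟨y, hxy, hyz⟩
    | cons e rest =>
      obtain ⟨⟨hb, he⟩, -⟩ := List.isChain_cons_cons.1 hchain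
      obtain ⟨b₃, u₃, v₃⟩ := e
      simp only at hb he
      subst he
      have h₃ := hmem _ (List.mem_cons_of_mem _ (List.mem_cons_of_mem _ List.mem_cons_self))
      exact (hb (h₃.source_inr_inr hβ).1.symm).elim

theorem ConnectsVia.inr_inl (hα : IsPure α) (hβ : IsPure β) {L} {z : Z} {x : X}
    (h : ConnectsVia α β L (inr z) (inl x)) : ∃ y, (inr z, inl y) ∈ β ∧ (inr y, inl x) ∈ α := by
  obtain ⟨⟨-, hmem, hchain⟩, hhead, hlast⟩ := h
  rcases L with _ | ⟨⟨b₁, u₁, v₁⟩, _ | ⟨⟨b₂, u₂, v₂⟩, rest⟩⟩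
  · simp at hhead
  · simp only [List.head?_cons, Option.map_some, Option.some.injEq, ι₀, elim_inr] at hhead
    subst hhead
    obtain ⟨-, y, -, rfl⟩ := (hmem _ List.mem_cons_self).source_inr_inr hβ
    simp [ι₀] at hlast
  · simp only [List.head?_cons, Option.map_some, Option.some.injEq, ι₀, elim_inr] at hhead
    subst hhead
    obtain ⟨rfl, y, hzy, rfl⟩ := (hmem _ List.mem_cons_self).source_inr_inr hβ
    obtain ⟨⟨hb, rfl⟩, hchain⟩ := List.isChain_cons_cons.1 hchain
    obtain rfl : b₂ = false := by simpa using hb.symm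
    obtain ⟨x', hyx, rfl⟩ :=
      (hmem _ (List.mem_cons_of_mem _ List.mem_cons_self)).false_source_inr_inl hα
    cases rest with
    | nil =>
      obtain rfl : x' = x := by simpa [ι₀] using hlast
      exact ⟨y, hzy, hyx⟩
    | cons e rest =>
      obtain ⟨⟨hb, he⟩, -⟩ := List.isChain_cons_cons.1 hchain
      obtain ⟨b₃, u₃, v₃⟩ := e
      simp only at hb he
      subst he
      have h₃ := hmem _ (List.mem_cons_of_mem _ (List.mem_cons_of_mem _ List.mem_cons_self))
      exact (hb (h₃.source_inl hα).1.symm).elim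

theorem c12_comp (hα : IsPure α) (hβ : IsPure β) :
    c12 (comp β α) = relComp (c12 β) (c12 α) := by
  ext ⟨x, z⟩
  constructor
  · rintro ⟨L, hL⟩
    exact hL.inl_inr hα hβ
  · rintro ⟨y, hxy, hyz⟩
    exact mem_comp_of_fst_snd hxy hyz rfl rfl rfl

theorem c21_comp (hα : IsPure α) (hβ : IsPure β) :
    c21 (comp β α) = relComp (c21 α) (c21 β) := by
  ext ⟨z, x⟩
  constructor
  · rintro ⟨L, hL⟩
    exact hL.inr_inl hα hβ
  · rintro ⟨y, hzy, hyx⟩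
    exact mem_comp_of_snd_fst hzy hyx rfl rfl rfl

end Composition

section OfComponents

def ofComponents (θ : Set (X × Y)) (γ : Set (Y × X)) : PBR X Y :=
  {p | match p with
    | (inl x, inr y) => (x, y) ∈ θ
    | (inr y, inl x) => (y, x) ∈ γ
    | _ => False}

theorem isPure_ofComponents (θ : Set (X × Y)) (γ : Set (Y × X)) :
    IsPure (ofComponents θ γ) := by
  rintro ⟨x | y, x' | y'⟩ h
  · exact h.elim
  · exact Or.inl ⟨x, y', rfl⟩
  · exact Or.inr ⟨y, x', rfl⟩
  · exact h.elim

theorem c12_ofComponents (θ : Set (X × Y)) (γ : Set (Y × X)) :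
    c12 (ofComponents θ γ) = θ :=
  rfl

theorem c21_ofComponents (θ : Set (X × Y)) (γ : Set (Y × X)) :
    c21 (ofComponents θ γ) = γ :=
  rfl

theorem ofComponents_c12_c21 {α : PBR X Y} (hα : IsPure α) :
    ofComponents (c12 α) (c21 α) = α := by
  ext ⟨x | y, x' | y'⟩
  · exact ⟨False.elim, fun h => by rcases hα _ h with ⟨_, _, h'⟩ | ⟨_, _, h'⟩ <;> cases h'⟩
  · exact Iff.rfl
  · exact Iff.rfl
  · exact ⟨False.elim, fun h => by rcases hα _ h with ⟨_, _, h'⟩ | ⟨_, _, h'⟩ <;> cases h'⟩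

variable (X Y) in
def pureEquivComponents : {α : PBR X Y // IsPure α} ≃ Set (X × Y) × Set (Y × X) where
  toFun α := (c12 α.1, c21 α.1)
  invFun θγ := ⟨ofComponents θγ.1 θγ.2, isPure_ofComponents _ _⟩
  left_inv α := Subtype.ext (ofComponents_c12_c21 α.2)
  right_inv θγ := Prod.ext (c12_ofComponents θγ.1 θγ.2) (c21_ofComponents θγ.1 θγ.2)

end OfComponents

theorem pure_pbr_double_of_binary_relations_general (X Y Z : Type) :
    Function.Bijective
      (fun α : {α : PBR X Y // IsPure α} => (c12 α.1, c21 α.1)) ∧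
    (∀ (α : PBR X Y) (β : PBR Y Z), IsPure α → IsPure β →
      c12 (comp β α) = relComp (c12 β) (c12 α) ∧
      c21 (comp β α) = relComp (c21 α) (c21 β)) :=
  ⟨(pureEquivComponents X Y).bijective, fun _ _ hα hβ => ⟨c12_comp hα hβ, c21_comp hα hβ⟩⟩

/-- `α ↦ (α₁₂, α₂₁)` is a bijection from pure PBRs on `(X,Y)` onto pairs of
binary relations `θ ⊆ X×Y`, `γ ⊆ Y×X`, compatible with composition:
`(β∘α)₁₂ = β₁₂∘α₁₂` and `(β∘α)₂₁ = α₂₁∘β₂₁`. Hence the category of pure PBRs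
is isomorphic to the double `𝔅^⋉` of the category of binary relations. -/
theorem pure_pbr_double_of_binary_relations (X Y Z : Type)
    [Fintype X] [Fintype Y] [Fintype Z] :
    Function.Bijective
      (fun α : {α : PBR X Y // IsPure α} => (c12 α.1, c21 α.1)) ∧
    (∀ (α : PBR X Y) (β : PBR Y Z), IsPure α → IsPure β →
      c12 (comp β α) = relComp (c12 β) (c12 α) ∧
      c21 (comp β α) = relComp (c21 α) (c21 β)) :=
  pure_pbr_double_of_binary_relations_general X Y Z

end PBRPaper
end

section
/- Polarized factorization: let α be a PBR on (X,Y). Define δ_α as the right polarized idempotent on (X,X) whose edges are those of ε_X together with the edges (x^(d),x'^(d)) for (x,x') ∈ α₁₁; define γ_α as the pure PBR on (X,Y) with (γ_α)₁₂ = α₁₂ and (γ_α)₂₁ = α₂₁; define β_α as the left polarized idempotent on (Y,Y) whose edges are those of ε_Y together with the edges (y^(c),y'^(c)) for (y,y') ∈ α₂₂. Then α = β_α∘γ_α∘δ_α, and this factorization is unique: if α = β∘γ∘δ where β is a left polarized idempotent on (Y,Y), γ is a pure PBR on (X,Y) and δ is a right polarized idempotent on (X,X), then β = β_α, γ = γ_α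 and δ = δ_α. -/
namespace PBRPaper

variable {X Y Z : Type}

variable {X : Type} in
/-- A left polarized idempotent: a PBR on `(X,X)` containing all edges of
`ε_X`, any other edge joining two elements of the codomain copy. -/
def IsLeftPol (α : PBR X X) : Prop :=
  eps X ⊆ α ∧ ∀ p ∈ α, p ∈ eps X ∨ ∃ y y' : X, p = (Sum.inr y, Sum.inr y')

variable {X : Type} in
/-- A right polarized idempotent: a PBR on `(X,X)` containing all edges of
`ε_X`, any other edge joining two elements of the domain copy. -/
def IsRightPol (α : PBR X X) : Prop :=
  eps X ⊆ α ∧ ∀ p ∈ α, p ∈ eps X ∨ ∃ x x' : X, p = (Sum.inl x, Sum.inl x')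

variable {X Y : Type} in
/-- The right polarized idempotent `δ_α`: `ε_X` together with the
domain-domain edges of `α`. -/
def deltaP (α : PBR X Y) : PBR X X :=
  eps X ∪ {p | ∃ x x' : X, (Sum.inl x, Sum.inl x') ∈ α ∧ p = (Sum.inl x, Sum.inl x')}

variable {X Y : Type} in
/-- The pure part `γ_α` of `α`: the edges of `α` joining the domain copy of
`X` and the codomain copy of `Y`. -/
def gammaP (α : PBR X Y) : PBR X Y :=
  {p | p ∈ α ∧ ((∃ (x : X) (y : Y), p = (Sum.inl x, Sum.inr y)) ∨
    ∃ (y : Y) (x : X), p = (Sum.inr y, Sum.inl x))}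

variable {X Y : Type} in
/-- The left polarized idempotent `β_α`: `ε_Y` together with the
codomain-codomain edges of `α`. -/
def betaP (α : PBR X Y) : PBR Y Y :=
  eps Y ∪ {p | ∃ y y' : Y, (Sum.inr y, Sum.inr y') ∈ α ∧ p = (Sum.inr y, Sum.inr y')}

/-!
If `α` has no codomain–codomain edges and `β` no domain–domain edges, every `(α,β)`-connected
sequence has at most two edges: the middle edge of three would have to start and end in the
shared copy of `Y`. Composition is then computed blockwise: `(β∘α)₁₁ = α₁₁`, `(β∘α)₂₂ = β₂₂`,
`(β∘α)₁₂ = α₁₂ ; β₁₂` and `(β∘α)₂₁ = β₂₁ ; α₂₁`. A left polarized idempotent, a pure PBR and a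
right polarized idempotent have blocks `(∅, =, =, b)`, `(∅, g₁₂, g₂₁, ∅)` and `(d, =, =, ∅)`,
so `β∘γ∘δ` has blocks `(d, g₁₂, g₂₁, b)`; existence and uniqueness are both read off from this.
-/

namespace PBR

def rel₁₁ (α : PBR X Y) (x x' : X) : Prop := (Sum.inl x, Sum.inl x') ∈ α

def rel₁₂ (α : PBR X Y) (x : X) (y : Y) : Prop := (Sum.inl x, Sum.inr y) ∈ α

def rel₂₁ (α : PBR X Y) (y : Y) (x : X) : Prop := (Sum.inr y, Sum.inl x) ∈ α

def rel₂₂ (α : PBR X Y) (y y' : Y) : Prop := (Sum.inr y, Sum.inr y') ∈ α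

lemma ext_rels {α α' : PBR X Y} (h₁₁ : α.rel₁₁ = α'.rel₁₁) (h₁₂ : α.rel₁₂ = α'.rel₁₂)
    (h₂₁ : α.rel₂₁ = α'.rel₂₁) (h₂₂ : α.rel₂₂ = α'.rel₂₂) : α = α' := by
  ext ⟨u | u, v | v⟩
  exacts [iff_of_eq (congrFun₂ h₁₁ u v), iff_of_eq (congrFun₂ h₁₂ u v),
    iff_of_eq (congrFun₂ h₂₁ u v), iff_of_eq (congrFun₂ h₂₂ u v)]

def ofRels (r₁₁ : X → X → Prop) (r₁₂ : X → Y → Prop) (r₂₁ : Y → X → Prop)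
    (r₂₂ : Y → Y → Prop) : PBR X Y :=
  {p | Sum.elim (fun x => Sum.elim (r₁₁ x) (r₁₂ x)) (fun y => Sum.elim (r₂₁ y) (r₂₂ y)) p.1 p.2}

section ofRels

variable (r₁₁ : X → X → Prop) (r₁₂ : X → Y → Prop) (r₂₁ : Y → X → Prop) (r₂₂ : Y → Y → Prop)

@[simp] lemma rel₁₁_ofRels : (ofRels r₁₁ r₁₂ r₂₁ r₂₂).rel₁₁ = r₁₁ := rfl

@[simp] lemma rel₁₂_ofRels : (ofRels r₁₁ r₁₂ r₂₁ r₂₂).rel₁₂ = r₁₂ := rfl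

@[simp] lemma rel₂₁_ofRels : (ofRels r₁₁ r₁₂ r₂₁ r₂₂).rel₂₁ = r₂₁ := rfl

@[simp] lemma rel₂₂_ofRels : (ofRels r₁₁ r₁₂ r₂₁ r₂₂).rel₂₂ = r₂₂ := rfl

end ofRels

lemma ofRels_rels (α : PBR X Y) : ofRels α.rel₁₁ α.rel₁₂ α.rel₂₁ α.rel₂₂ = α :=
  ext_rels rfl rfl rfl rfl

end PBR

open PBR

section Comp

variable {α : PBR X Y} {β : PBR Y Z}

lemma exists_mid_of_chain {e f : Bool × (X ⊕ Y ⊕ Z) × (X ⊕ Y ⊕ Z)}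
    (he : EdgeMem α β e) (hf : EdgeMem α β f) (hlabel : e.1 ≠ f.1) (hjoin : e.2.2 = f.2.1) :
    ∃ y : Y, f.2.1 = Sum.inr (Sum.inl y) := by
  obtain ⟨_ | _, u, v⟩ := e <;> obtain ⟨_ | _, u', v'⟩ := f <;>
    simp only [ne_eq, not_true_eq_false] at hlabel <;>
    simp only [EdgeMem, Bool.false_eq_true, if_true, if_false] at he hf <;>
    obtain ⟨⟨p₁, p₂⟩, -, -, rfl⟩ := he <;> obtain ⟨⟨q₁, q₂⟩, -, rfl, -⟩ := hf <;>
    cases p₂ <;> cases q₁ <;> simp_all [ι₁, ι₂]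

lemma EdgeMem.target_ne_mid (hα : ∀ y y', ¬ α.rel₂₂ y y') (hβ : ∀ y y', ¬ β.rel₁₁ y y')
    {e : Bool × (X ⊕ Y ⊕ Z) × (X ⊕ Y ⊕ Z)} (he : EdgeMem α β e) {y y' : Y}
    (hy : e.2.1 = Sum.inr (Sum.inl y)) : e.2.2 ≠ Sum.inr (Sum.inl y') := by
  obtain ⟨_ | _, u, v⟩ := e <;>
    simp only [EdgeMem, Bool.false_eq_true, if_true, if_false] at he <;>
    obtain ⟨⟨p₁, p₂⟩, hp, rfl, rfl⟩ := he <;>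
    cases p₁ <;> cases p₂ <;> simp_all [ι₁, ι₂, PBR.rel₁₁, PBR.rel₂₂]

lemma IsConnSeq.length_le_two (hα : ∀ y y', ¬ α.rel₂₂ y y') (hβ : ∀ y y', ¬ β.rel₁₁ y y')
    {L : List (Bool × (X ⊕ Y ⊕ Z) × (X ⊕ Y ⊕ Z))} (hL : IsConnSeq α β L) : L.length ≤ 2 := by
  obtain ⟨-, hmem, hchain⟩ := hL
  match L, hmem, hchain with
  | [], _, _ | [_], _, _ | [_, _], _, _ => simp
  | e :: f :: g :: _, hmem, hchain =>
    obtain ⟨⟨hef, hjoin₁⟩, hchain⟩ := List.isChain_cons_cons.mp hchain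
    obtain ⟨hfg, hjoin₂⟩ := List.rel_of_isChain_cons_cons hchain
    obtain ⟨y, hy⟩ := exists_mid_of_chain (hmem e (by simp)) (hmem f (by simp)) hef hjoin₁
    obtain ⟨y', hy'⟩ := exists_mid_of_chain (hmem f (by simp)) (hmem g (by simp)) hfg hjoin₂
    exact absurd (hjoin₂.trans hy') ((hmem f (by simp)).target_ne_mid hα hβ hy)

lemma connectsVia_singleton {e : Bool × (X ⊕ Y ⊕ Z) × (X ⊕ Y ⊕ Z)} {a b : X ⊕ Z} :
    ConnectsVia α β [e] a b ↔ EdgeMem α β e ∧ e.2.1 = ι₀ a ∧ e.2.2 = ι₀ b := by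
  refine ⟨fun ⟨⟨_, hmem, _⟩, hhead, hlast⟩ => ?_, fun ⟨he, hhead, hlast⟩ => ?_⟩
  · exact ⟨hmem e (List.mem_singleton_self e), by simpa using hhead, by simpa using hlast⟩
  · exact ⟨⟨List.cons_ne_nil _ _, by simpa using he, List.isChain_singleton e⟩,
      by simp [hhead], by simp [hlast]⟩

lemma connectsVia_pair {e f : Bool × (X ⊕ Y ⊕ Z) × (X ⊕ Y ⊕ Z)} {a b : X ⊕ Z} :
    ConnectsVia α β [e, f] a b ↔ EdgeMem α β e ∧ EdgeMem α β f ∧ e.1 ≠ f.1 ∧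
      e.2.2 = f.2.1 ∧ e.2.1 = ι₀ a ∧ f.2.2 = ι₀ b := by
  refine ⟨fun ⟨⟨_, hmem, hchain⟩, hhead, hlast⟩ => ?_,
    fun ⟨he, hf, hlabel, hjoin, hhead, hlast⟩ => ?_⟩
  · obtain ⟨hlabel, hjoin⟩ := List.isChain_pair.mp hchain
    exact ⟨hmem e (by simp), hmem f (by simp), hlabel, hjoin, by simpa using hhead,
      by simpa using hlast⟩
  · exact ⟨⟨List.cons_ne_nil _ _, by simp [he, hf], List.isChain_pair.mpr ⟨hlabel, hjoin⟩⟩,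
      by simp [hhead], by simp [hlast]⟩

lemma mem_comp_iff (hα : ∀ y y', ¬ α.rel₂₂ y y') (hβ : ∀ y y', ¬ β.rel₁₁ y y') {a b : X ⊕ Z} :
    (a, b) ∈ comp β α ↔
      (∃ e, ConnectsVia α β [e] a b) ∨ ∃ e f, ConnectsVia α β [e, f] a b := by
  refine ⟨fun ⟨L, hL⟩ => ?_, ?_⟩
  · match L, hL, hL.1.length_le_two hα hβ with
    | [], hL, _ => exact absurd rfl hL.1.1
    | [e], hL, _ => exact Or.inl ⟨e, hL⟩
    | [e, f], hL, _ => exact Or.inr ⟨e, f, hL⟩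
  · rintro (⟨e, hL⟩ | ⟨e, f, hL⟩) <;> exact ⟨_, hL⟩

lemma rel₁₁_comp (hα : ∀ y y', ¬ α.rel₂₂ y y') (hβ : ∀ y y', ¬ β.rel₁₁ y y') :
    (comp β α).rel₁₁ = α.rel₁₁ := by
  ext x x'
  simp [rel₁₁, mem_comp_iff hα hβ, connectsVia_singleton, connectsVia_pair, EdgeMem, ι₀, ι₁, ι₂,
    Prod.exists, Bool.exists_bool, Sum.exists]

lemma rel₁₂_comp (hα : ∀ y y', ¬ α.rel₂₂ y y') (hβ : ∀ y y', ¬ β.rel₁₁ y y') :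
    (comp β α).rel₁₂ = Relation.Comp α.rel₁₂ β.rel₁₂ := by
  ext x z
  simp [rel₁₂, mem_comp_iff hα hβ, connectsVia_singleton, connectsVia_pair, EdgeMem, ι₀, ι₁, ι₂,
    Prod.exists, Bool.exists_bool, Sum.exists, Relation.Comp]

lemma rel₂₁_comp (hα : ∀ y y', ¬ α.rel₂₂ y y') (hβ : ∀ y y', ¬ β.rel₁₁ y y') :
    (comp β α).rel₂₁ = Relation.Comp β.rel₂₁ α.rel₂₁ := by
  ext z x
  simp [rel₂₁, mem_comp_iff hα hβ, connectsVia_singleton, connectsVia_pair, EdgeMem, ι₀, ι₁, ι₂,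
    Prod.exists, Bool.exists_bool, Sum.exists, Relation.Comp]

lemma rel₂₂_comp (hα : ∀ y y', ¬ α.rel₂₂ y y') (hβ : ∀ y y', ¬ β.rel₁₁ y y') :
    (comp β α).rel₂₂ = β.rel₂₂ := by
  ext z z'
  simp [rel₂₂, mem_comp_iff hα hβ, connectsVia_singleton, connectsVia_pair, EdgeMem, ι₀, ι₁, ι₂,
    Prod.exists, Bool.exists_bool, Sum.exists]

lemma comp_ofRels (r₁₁ : X → X → Prop) (r₁₂ : X → Y → Prop) (r₂₁ : Y → X → Prop)
    (s₁₂ : Y → Z → Prop) (s₂₁ : Z → Y → Prop) (s₂₂ : Z → Z → Prop) :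
    comp (ofRels ⊥ s₁₂ s₂₁ s₂₂) (ofRels r₁₁ r₁₂ r₂₁ ⊥) =
      ofRels r₁₁ (Relation.Comp r₁₂ s₁₂) (Relation.Comp s₂₁ r₂₁) s₂₂ := by
  have hr : ∀ y y', ¬ (ofRels r₁₁ r₁₂ r₂₁ ⊥).rel₂₂ y y' := fun _ _ => id
  have hs : ∀ y y', ¬ (ofRels ⊥ s₁₂ s₂₁ s₂₂).rel₁₁ y y' := fun _ _ => id
  exact ext_rels (rel₁₁_comp hr hs) (rel₁₂_comp hr hs) (rel₂₁_comp hr hs) (rel₂₂_comp hr hs)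

lemma comp_comp_ofRels (d : X → X → Prop) (g₁₂ : X → Y → Prop) (g₂₁ : Y → X → Prop)
    (b : Y → Y → Prop) :
    comp (ofRels ⊥ Eq Eq b) (comp (ofRels ⊥ g₁₂ g₂₁ ⊥) (ofRels d Eq Eq ⊥)) =
      ofRels d g₁₂ g₂₁ b := by
  rw [comp_ofRels, Relation.eq_comp, Relation.comp_eq, comp_ofRels, Relation.comp_eq,
    Relation.eq_comp]

end Comp

lemma betaP_eq_ofRels (α : PBR X Y) : betaP α = ofRels ⊥ Eq Eq α.rel₂₂ := by
  ext ⟨u | u, v | v⟩ <;> simp [betaP, eps, ofRels, rel₂₂, eq_comm]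

lemma gammaP_eq_ofRels (α : PBR X Y) : gammaP α = ofRels ⊥ α.rel₁₂ α.rel₂₁ ⊥ := by
  ext ⟨u | u, v | v⟩ <;> simp [gammaP, ofRels, rel₁₂, rel₂₁]

lemma deltaP_eq_ofRels (α : PBR X Y) : deltaP α = ofRels α.rel₁₁ Eq Eq ⊥ := by
  ext ⟨u | u, v | v⟩ <;> simp [deltaP, eps, ofRels, rel₁₁, eq_comm]

lemma IsLeftPol.exists_eq_ofRels {β : PBR Y Y} (hβ : IsLeftPol β) :
    ∃ b, β = ofRels ⊥ Eq Eq b := by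
  refine ⟨β.rel₂₂, Set.ext fun p => ⟨fun hp => ?_, fun hp => ?_⟩⟩
  · rcases hβ.2 p hp with ⟨y, rfl | rfl⟩ | ⟨y, y', rfl⟩
    exacts [rfl, rfl, hp]
  · obtain ⟨u | u, v | v⟩ := p
    · exact (hp : False).elim
    · obtain rfl : u = v := hp
      exact hβ.1 ⟨u, Or.inl rfl⟩
    · obtain rfl : u = v := hp
      exact hβ.1 ⟨u, Or.inr rfl⟩
    · exact hp

lemma IsPure.exists_eq_ofRels {γ : PBR X Y} (hγ : IsPure γ) :
    ∃ g₁₂ g₂₁, γ = ofRels ⊥ g₁₂ g₂₁ ⊥ := by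
  refine ⟨γ.rel₁₂, γ.rel₂₁, Set.ext fun p => ⟨fun hp => ?_, fun hp => ?_⟩⟩
  · rcases hγ p hp with ⟨x, y, rfl⟩ | ⟨y, x, rfl⟩ <;> exact hp
  · obtain ⟨u | u, v | v⟩ := p
    exacts [(hp : False).elim, hp, hp, (hp : False).elim]

lemma IsRightPol.exists_eq_ofRels {δ : PBR X X} (hδ : IsRightPol δ) :
    ∃ d, δ = ofRels d Eq Eq ⊥ := by
  refine ⟨δ.rel₁₁, Set.ext fun p => ⟨fun hp => ?_, fun hp => ?_⟩⟩
  · rcases hδ.2 p hp with ⟨x, rfl | rfl⟩ | ⟨x, x', rfl⟩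
    exacts [rfl, rfl, hp]
  · obtain ⟨u | u, v | v⟩ := p
    · exact hp
    · obtain rfl : u = v := hp
      exact hδ.1 ⟨u, Or.inl rfl⟩
    · obtain rfl : u = v := hp
      exact hδ.1 ⟨u, Or.inr rfl⟩
    · exact (hp : False).elim

theorem polarized_factorization_general (X Y : Type) (α : PBR X Y) :
    α = comp (betaP α) (comp (gammaP α) (deltaP α)) ∧
    ∀ (β : PBR Y Y) (γ : PBR X Y) (δ : PBR X X),
      IsLeftPol β → IsPure γ → IsRightPol δ →
      α = comp β (comp γ δ) →
      β = betaP α ∧ γ = gammaP α ∧ δ = deltaP α := by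
  refine ⟨?_, fun β γ δ hβ hγ hδ hα => ?_⟩
  · rw [betaP_eq_ofRels, gammaP_eq_ofRels, deltaP_eq_ofRels, comp_comp_ofRels, ofRels_rels]
  · obtain ⟨b, rfl⟩ := hβ.exists_eq_ofRels
    obtain ⟨g₁₂, g₂₁, rfl⟩ := hγ.exists_eq_ofRels
    obtain ⟨d, rfl⟩ := hδ.exists_eq_ofRels
    rw [comp_comp_ofRels] at hα
    subst hα
    simp [betaP_eq_ofRels, gammaP_eq_ofRels, deltaP_eq_ofRels]

/-- Polarized factorization: every PBR `α` factors uniquely as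
`α = β_α ∘ γ_α ∘ δ_α` with `β_α` a left polarized idempotent, `γ_α` pure and
`δ_α` a right polarized idempotent. -/
theorem polarized_factorization (X Y : Type) [Fintype X] [Fintype Y]
    (α : PBR X Y) :
    α = comp (betaP α) (comp (gammaP α) (deltaP α)) ∧
    ∀ (β : PBR Y Y) (γ : PBR X Y) (δ : PBR X X),
      IsLeftPol β → IsPure γ → IsRightPol δ →
      α = comp β (comp γ δ) →
      β = betaP α ∧ γ = gammaP α ∧ δ = deltaP α :=
  polarized_factorization_general X Y α

end PBRPaper
end
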